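/- arXiv:math/0401326 — 4 statements merged into one kernel-verified Lean document; each statement's English description precedes it below -/
import Mathlib

section
/- Let M be a finite-dimensional H̃_n-module and let t = (t_1,…,t_n) ∈ (ℂ×)^n with t_i ≠ t_{i+1}. Then the operator x_{i+1} − x_i is invertible on the generalized weight space M_t^gen, so that the map τ_i m = (T_i − (q−q^{−1}) x_{i+1} (x_{i+1} − x_i)^{−1}) m is well defined on M_t^gen, and τ_i maps M_t^gen into M_{s_it}^gen, where s_it is obtained from t by interchanging the coordinates t_i and t_{i+1}. -/
open scoped Classical

noncomputable section

/-! ## Partitions and skew shapes -/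

/-- A partition: a weakly decreasing sequence of natural numbers that is eventually zero. -/
structure Partition' where
  part : ℕ → ℕ
  antitone : Antitone part
  eventually_zero : ∃ N, part N = 0

/-- A skew shape `λ/μ`: a pair of partitions with `μ ⊆ λ`. -/
structure SkewShape where
  lam : Partition'
  mu : Partition'
  mu_le : ∀ i, mu.part i ≤ lam.part i

/-- The boxes of the skew shape: pairs `(row, column)` (0-indexed). -/
def SkewShape.cellSet (S : SkewShape) : Set (ℕ × ℕ) :=
  {b | S.mu.part b.1 ≤ b.2 ∧ b.2 < S.lam.part b.1}

theorem SkewShape.cellSet_finite (S : SkewShape) : S.cellSet.Finite := by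
  obtain ⟨N, hN⟩ := S.lam.eventually_zero
  refine Set.Finite.subset ((Set.finite_Iio N).prod (Set.finite_Iio (S.lam.part 0))) ?_
  rintro ⟨r, c⟩ ⟨h1, h2⟩
  dsimp only at h1 h2
  have h0 : S.lam.part r ≤ S.lam.part 0 := S.lam.antitone (Nat.zero_le r)
  constructor
  · simp only [Set.mem_Iio]
    by_contra h
    push_neg at h
    have : S.lam.part r ≤ S.lam.part N := S.lam.antitone h
    omega
  · simp only [Set.mem_Iio]; omega

/-- The boxes of a skew shape, as a finite set. -/
def SkewShape.cells (S : SkewShape) : Finset (ℕ × ℕ) := S.cellSet_finite.toFinset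

theorem SkewShape.mem_cells {S : SkewShape} {b : ℕ × ℕ} :
    b ∈ S.cells ↔ S.mu.part b.1 ≤ b.2 ∧ b.2 < S.lam.part b.1 := by
  simp [SkewShape.cells, SkewShape.cellSet]

/-- The (major) diagonal on which a box sits. -/
def boxDiag (b : ℕ × ℕ) : ℤ := (b.2 : ℤ) - (b.1 : ℤ)

/-- The order in which the boxes of a skew shape are numbered `box₁, …, boxₙ`:
along major diagonals from southwest to northeast. -/
def numLT (b b' : ℕ × ℕ) : Prop :=
  boxDiag b < boxDiag b' ∨ (boxDiag b = boxDiag b' ∧ b.1 < b'.1)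

/-- Column reading order on boxes. -/
def colLT (b b' : ℕ × ℕ) : Prop := b.2 < b'.2 ∨ (b.2 = b'.2 ∧ b.1 < b'.1)

/-- Row reading order on boxes. -/
def rowLT (b b' : ℕ × ℕ) : Prop := b.1 < b'.1 ∨ (b.1 = b'.1 ∧ b.2 < b'.2)

/-- A standard tableau of shape `S` with `n` boxes and entries `off+1, …, off+n`:
entries increase to the right along rows and down columns. -/
structure StdTab (S : SkewShape) (off n : ℕ) where
  entry : ℕ × ℕ → ℕ
  zero_off : ∀ b, b ∉ S.cells → entry b = 0
  bijOn : Set.BijOn entry ↑S.cells (Set.Icc (off + 1) (off + n))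
  row_inc : ∀ r c, (r, c) ∈ S.cells → (r, c + 1) ∈ S.cells → entry (r, c) < entry (r, c + 1)
  col_inc : ∀ r c, (r, c) ∈ S.cells → (r + 1, c) ∈ S.cells → entry (r, c) < entry (r + 1, c)

/-- `L.box i` : the box of the standard tableau `L` containing the entry `i`. -/
def StdTab.box {S : SkewShape} {off n : ℕ} (L : StdTab S off n) (i : ℕ) : ℕ × ℕ :=
  Function.invFunOn L.entry ↑S.cells i

/-- The column reading tableau: entries `1,…,n` entered consecutively down the columns,
beginning with the southwest-most connected component, filling columns left to right.
(Equivalently: the entries are increasing for the column reading order on boxes.) -/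
def IsColReading {S : SkewShape} {off n : ℕ} (C : StdTab S off n) : Prop :=
  ∀ b ∈ S.cells, ∀ b' ∈ S.cells, (colLT b b' ↔ C.entry b < C.entry b')

/-- The row reading tableau: entries `1,…,n` entered left to right across the rows,
beginning with the northeast-most connected component, filling rows top to bottom. -/
def IsRowReading {S : SkewShape} {off n : ℕ} (R : StdTab S off n) : Prop :=
  ∀ b ∈ S.cells, ∀ b' ∈ S.cells, (rowLT b b' ↔ R.entry b < R.entry b')

/-! ## Placed skew shapes -/

/-- `q^{2z} = e^{z ln (q²)}`. -/
def qpow (q : ℝ) (z : ℂ) : ℂ := Complex.exp (z * Real.log (q ^ 2))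

/-- A placed skew shape `(c, λ/μ)`: a skew shape together with a content function on its
boxes with values in `ℝ + i[0, 2π/ln(q²))`, weakly increasing (among boxes whose contents
differ by integers) for the numbering order, increasing by exactly `1` precisely between
adjacent diagonals and constant precisely on diagonals. -/
structure PlacedSkewShape (q : ℝ) where
  S : SkewShape
  c : ℕ × ℕ → ℂ
  im_range : ∀ b ∈ S.cells, 0 ≤ (c b).im ∧ (c b).im < 2 * Real.pi / Real.log (q ^ 2)
  num_mono : ∀ b ∈ S.cells, ∀ b' ∈ S.cells, numLT b b' →
      (∃ k : ℤ, c b' - c b = (k : ℂ)) → (c b).re ≤ (c b').re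
  adj_diag : ∀ b ∈ S.cells, ∀ b' ∈ S.cells, (c b' = c b + 1 ↔ boxDiag b' = boxDiag b + 1)
  same_diag : ∀ b ∈ S.cells, ∀ b' ∈ S.cells, (c b = c b' ↔ boxDiag b = boxDiag b')

/-! ## The affine Hecke algebra: module structures

A module for the affine Hecke algebra `H̃_n` (with parameter `q`) is a complex vector
space together with operators `T_1, …, T_{n-1}` and invertible pairwise commuting
operators `x_1, …, x_n` satisfying the defining relations of `H̃_n`. -/

structure AHMod (n : ℕ) (q : ℂ) (M : Type) [AddCommGroup M] [Module ℂ M] where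
  T : ℕ → Module.End ℂ M
  x : ℕ → Module.End ℂ M
  comm_TT : ∀ i j, 1 ≤ i → j ≤ n - 1 → i + 1 < j → T i * T j = T j * T i
  braid : ∀ i, 1 ≤ i → i + 1 ≤ n - 1 → T i * T (i + 1) * T i = T (i + 1) * T i * T (i + 1)
  quad : ∀ i, 1 ≤ i → i ≤ n - 1 → T i * T i = (q - q⁻¹) • T i + 1
  comm_xx : ∀ i j, 1 ≤ i → i ≤ n → 1 ≤ j → j ≤ n → x i * x j = x j * x i
  comm_xT : ∀ i j, 1 ≤ i → i ≤ n → 1 ≤ j → j ≤ n - 1 → j + 1 ≠ i → j ≠ i →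
      x i * T j = T j * x i
  xsucc : ∀ i, 1 ≤ i → i + 1 ≤ n → x (i + 1) = T i * x i * T i
  x_unit : ∀ i, 1 ≤ i → i ≤ n → IsUnit (x i)

namespace AHMod

variable {n : ℕ} {q : ℂ} {M : Type} [AddCommGroup M] [Module ℂ M]

/-- `m` lies in the generalized weight space `M_t^gen`. -/
def genWt (A : AHMod n q M) (t : ℕ → ℂ) (m : M) : Prop :=
  ∀ i, 1 ≤ i → i ≤ n → ∃ k : ℕ, 0 < k ∧ ((A.x i - t i • (1 : Module.End ℂ M)) ^ k) m = 0

/-- `m` is a simultaneous eigenvector (weight vector) of weight `t`. -/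
def wtVec (A : AHMod n q M) (t : ℕ → ℂ) (m : M) : Prop :=
  ∀ i, 1 ≤ i → i ≤ n → A.x i m = t i • m

/-- `t` is a weight of `M`, i.e. `M_t^gen ≠ 0`. -/
def IsWeight (A : AHMod n q M) (t : ℕ → ℂ) : Prop := ∃ m : M, m ≠ 0 ∧ A.genWt t m

/-- A module is calibrated if it has a basis of simultaneous eigenvectors for the `x_i`. -/
def Calibrated (A : AHMod n q M) : Prop :=
  ∃ (ι : Type) (b : Module.Basis ι ℂ M), ∀ j : ι, ∃ t : ℕ → ℂ, A.wtVec t (b j)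

/-- A submodule invariant under all the operators. -/
def InvariantSub (A : AHMod n q M) (N : Submodule ℂ M) : Prop :=
  (∀ i, 1 ≤ i → i ≤ n - 1 → ∀ m ∈ N, A.T i m ∈ N) ∧
  (∀ i, 1 ≤ i → i ≤ n → ∀ m ∈ N, A.x i m ∈ N)

/-- Irreducibility: nonzero, and no invariant submodules besides `⊥` and `⊤`. -/
def IsIrreducible (A : AHMod n q M) : Prop :=
  (∃ m : M, m ≠ 0) ∧ ∀ N : Submodule ℂ M, A.InvariantSub N → N = ⊥ ∨ N = ⊤

end AHMod

/-- The weight `s_i t`: `t` with its `i`-th and `(i+1)`-st coordinates interchanged. -/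
def swapW (i : ℕ) (t : ℕ → ℂ) : ℕ → ℂ := fun j =>
  if j = i then t (i + 1) else if j = i + 1 then t i else t j

/-- The relation `m' = τ_i m` for `m` in the generalized weight space `M_t^gen`:
`m' = (T_i - (q - q⁻¹) x_{i+1} (x_{i+1} - x_i)⁻¹) m`, where the inverse is witnessed by an
element `u ∈ M_t^gen` with `(x_{i+1} - x_i) u = m`. -/
def AHMod.IsTau {n : ℕ} {q : ℂ} {M : Type} [AddCommGroup M] [Module ℂ M]
    (A : AHMod n q M) (i : ℕ) (t : ℕ → ℂ) (m m' : M) : Prop :=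
  A.genWt t m ∧ ∃ u, A.genWt t u ∧ (A.x (i + 1) - A.x i) u = m ∧
    m' = A.T i m - (q - q⁻¹) • (A.x (i + 1)) u

/-- `A.IsTauChain l t m m'` : `m' = τ_{i_p} ⋯ τ_{i_1} m` where `l = [i_1, …, i_p]` and
`m ∈ M_t^gen` (so `l` is the word read right-to-left: the head of `l` acts first). -/
def AHMod.IsTauChain {n : ℕ} {q : ℂ} {M : Type} [AddCommGroup M] [Module ℂ M]
    (A : AHMod n q M) : List ℕ → (ℕ → ℂ) → M → M → Prop
  | [], _, m, m' => m' = m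
  | i :: l, t, m, m' => ∃ a, A.IsTau i t m a ∧ A.IsTauChain l (swapW i t) a m'

/-! ## The modules `H̃^{(c,λ/μ)}` -/

/-- The effect on entries of interchanging `i` and `i+1`. -/
def swapEnt (i k : ℕ) : ℕ := if k = i then i + 1 else if k = i + 1 then i else k

/-- `L'` is the tableau `s_i L`: `L` with the entries `i` and `i+1` interchanged. -/
def IsSwapTab {S : SkewShape} {off n : ℕ} (i : ℕ) (L L' : StdTab S off n) : Prop :=
  ∀ b, L'.entry b = swapEnt i (L.entry b)

/-- The basis vector `v_{s_i L}`, interpreted as `0` if `s_i L` is not standard. -/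
def vswap {S : SkewShape} {off n : ℕ} (i : ℕ) (L : StdTab S off n) : StdTab S off n →₀ ℂ :=
  if h : ∃ L', IsSwapTab i L L' then Finsupp.single h.choose 1 else 0

/-- The diagonal coefficient `(T_i)_{LL} = (q - q⁻¹)/(1 - q^{2(c(L(i)) - c(L(i+1)))})`. -/
def TLL {q : ℝ} (P : PlacedSkewShape q) (off n i : ℕ) (L : StdTab P.S off n) : ℂ :=
  ((q : ℂ) - (q : ℂ)⁻¹) / (1 - qpow q (P.c (L.box i) - P.c (L.box (i + 1))))

/-- `A` is the `H̃_n`-module `H̃^{(c,λ/μ)}`: the prescribed action on the basis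
`{v_L}` indexed by standard tableaux. -/
def IsHTilde {q : ℝ} (n : ℕ) (P : PlacedSkewShape q)
    (A : AHMod n (q : ℂ) (StdTab P.S 0 n →₀ ℂ)) : Prop :=
  (∀ i, 1 ≤ i → i ≤ n → ∀ L : StdTab P.S 0 n,
      A.x i (Finsupp.single L 1) = qpow q (P.c (L.box i)) • Finsupp.single L 1) ∧
  (∀ i, 1 ≤ i → i ≤ n - 1 → ∀ L : StdTab P.S 0 n,
      A.T i (Finsupp.single L 1) =
        TLL P 0 n i L • Finsupp.single L 1 + ((q : ℂ)⁻¹ + TLL P 0 n i L) • vswap i L)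

/-! ## Words in the simple transpositions, reduced words, `T_w` -/

/-- A word in the simple transpositions `s_1, …, s_{n-1}`. -/
def isWord (n : ℕ) (l : List ℕ) : Prop := ∀ i ∈ l, 1 ≤ i ∧ i + 1 ≤ n

/-- The permutation of `{1, …, n} ⊆ ℕ` given by a word (`s_i` = transposition `(i, i+1)`). -/
def wordProd (l : List ℕ) : Equiv.Perm ℕ := (l.map fun i => Equiv.swap i (i + 1)).prod

/-- A reduced word: of minimal length among all words with the same product. -/
def isReducedWord (n : ℕ) (l : List ℕ) : Prop :=
  isWord n l ∧ ∀ l', isWord n l' → wordProd l' = wordProd l → l.length ≤ l'.length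

/-- The length `ℓ(w)` of a permutation: the length of a reduced word for it. -/
def lenOf (n : ℕ) (w : Equiv.Perm ℕ) : ℕ :=
  sInf {p | ∃ l, isWord n l ∧ wordProd l = w ∧ l.length = p}

/-- Bruhat-Chevalley order on `S_n`: `v ≤ w` if some reduced expression for `w` has a
subword equal to `v`. -/
def BruhatLE (n : ℕ) (v w : Equiv.Perm ℕ) : Prop :=
  ∃ l, isReducedWord n l ∧ wordProd l = w ∧ ∃ l', List.Sublist l' l ∧ wordProd l' = v

/-- The operator `T_{i_1} ⋯ T_{i_p}` for a word `l = [i_1, …, i_p]`. -/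
def TopWord {n : ℕ} {q : ℂ} {M : Type} [AddCommGroup M] [Module ℂ M]
    (A : AHMod n q M) (l : List ℕ) : Module.End ℂ M := (l.map A.T).prod

end

/-! On `M_t^gen` the commuting operators `x_i - t_i` and `x_{i+1} - t_{i+1}` are locally
nilpotent, so `x_{i+1} - x_i` is the nonzero scalar `t_{i+1} - t_i` plus a locally nilpotent
operator. It is therefore injective on the finite-dimensional space `M_t^gen`, hence bijective.
Writing `m = (x_{i+1} - x_i) u`, we get `τ_i m = σ u` for the intertwiner
`σ = T_i (x_{i+1} - x_i) - (q - q⁻¹) x_{i+1}`. The Hecke relations give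
`x_i σ = σ x_{i+1}` and `x_{i+1} σ = σ x_i`, and `σ` commutes with the other `x_j`, so `σ`
maps `M_t^gen` into `M_{s_i t}^gen`. -/

section HeckeRelations

variable {K R : Type*} [CommRing K] [Ring R] [Algebra K R]

def intertwiner (c : K) (T X Y : R) : R := T * (Y - X) - c • Y

variable {c : K} {T X Y : R}

theorem mul_conj_eq_of_quadratic (hT : T * T = c • T + 1) (hY : Y = T * X * T) :
    T * Y = X * T + c • Y := by
  calc T * Y = (T * T) * (X * T) := by rw [hY]; noncomm_ring
    _ = X * T + c • Y := by rw [hT, hY]; noncomm_ring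

theorem conj_mul_eq_of_quadratic (hT : T * T = c • T + 1) (hY : Y = T * X * T) :
    Y * T = T * X + c • Y := by
  calc Y * T = (T * X) * (T * T) := by rw [hY]; noncomm_ring
    _ = T * X + c • Y := by rw [hT, hY]; noncomm_ring

theorem intertwiner_mul_conj (hT : T * T = c • T + 1) (hY : Y = T * X * T)
    (hXY : Commute X Y) : intertwiner c T X Y * Y = X * intertwiner c T X Y := by
  have hXT : X * T = T * Y - c • Y := by rw [mul_conj_eq_of_quadratic hT hY]; abel
  have hTXY : T * X * Y = T * Y * X := by rw [mul_assoc, hXY.eq, ← mul_assoc]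
  simp only [intertwiner, mul_sub, sub_mul, ← mul_assoc, hXT, mul_smul_comm, smul_mul_assoc,
    hXY.eq, hTXY]
  abel

theorem intertwiner_mul (hT : T * T = c • T + 1) (hY : Y = T * X * T)
    (hXY : Commute X Y) : intertwiner c T X Y * X = Y * intertwiner c T X Y := by
  have hYT := conj_mul_eq_of_quadratic hT hY
  have hTXY : T * X * Y = T * Y * X := by rw [mul_assoc, hXY.eq, ← mul_assoc]
  simp only [intertwiner, mul_sub, sub_mul, ← mul_assoc, hYT, mul_smul_comm, smul_mul_assoc,
    add_mul, hTXY]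
  abel

theorem Commute.intertwiner {Z : R} (hT : Commute Z T) (hX : Commute Z X) (hY : Commute Z Y) :
    Commute Z (intertwiner c T X Y) :=
  (hT.mul_right (hY.sub_right hX)).sub_right (hY.smul_right c)

end HeckeRelations

namespace Module.End

variable {K V : Type*} [Field K] [AddCommGroup V] [Module K V]

theorem apply_mem_maxGenEigenspace_of_semiconjBy {σ f g : End K V} (h : SemiconjBy σ f g)
    {μ : K} {v : V} (hv : v ∈ f.maxGenEigenspace μ) : σ v ∈ g.maxGenEigenspace μ := by
  obtain ⟨k, hk⟩ := (mem_maxGenEigenspace _ _ _).mp hv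
  have hσ : SemiconjBy σ (f - μ • 1) (g - μ • 1) :=
    h.sub_right ((Commute.one_right σ).smul_right μ)
  refine (mem_maxGenEigenspace _ _ _).mpr ⟨k, ?_⟩
  rw [← mul_apply, ← (hσ.pow_right k).eq, mul_apply, hk, map_zero]

theorem maxGenEigenspace_inf_le_sub {f g : End K V} (h : Commute f g) (μ ν : K) :
    f.maxGenEigenspace μ ⊓ g.maxGenEigenspace ν ≤ (f - g).maxGenEigenspace (μ - ν) := by
  have hneg : g.maxGenEigenspace ν ≤ (-g).maxGenEigenspace (-ν) := by
    simpa using genEigenspace_le_smul g ν (-1) ⊤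
  simpa [sub_eq_add_neg] using
    (inf_le_inf_left _ hneg).trans (genEigenspace_inf_le_add f (-g) μ (-ν) ⊤ ⊤ h.neg_right)

theorem existsUnique_apply_eq_of_le_maxGenEigenspace [FiniteDimensional K V] {f : End K V}
    {p : Submodule K V} (hf : Set.MapsTo f p p) {μ : K} (hμ : μ ≠ 0)
    (hp : p ≤ f.maxGenEigenspace μ) {v : V} (hv : v ∈ p) : ∃! u, u ∈ p ∧ f u = v := by
  have hinj : Function.Injective (f.restrict hf) := by
    refine (injective_iff_map_eq_zero _).mpr fun u hu => ?_
    have hfu : f u = 0 := congrArg Subtype.val hu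
    have h0 : (u : V) ∈ f.maxGenEigenspace 0 :=
      eigenspace_le_maxGenEigenspace (mem_eigenspace_iff.mpr (by rw [hfu, zero_smul]))
    exact Subtype.ext ((disjoint_genEigenspace f hμ ⊤ ⊤).le_bot ⟨hp u.2, h0⟩)
  obtain ⟨u, hu⟩ := (LinearMap.injective_iff_surjective.mp hinj) ⟨v, hv⟩
  refine ⟨u, ⟨u.2, congrArg Subtype.val hu⟩, fun w ⟨hw, hfw⟩ => ?_⟩
  exact congrArg Subtype.val (hinj (Subtype.ext (hfw.trans (congrArg Subtype.val hu).symm)) :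
    (⟨w, hw⟩ : p) = u)

end Module.End

namespace AHMod

variable {n : ℕ} {q : ℂ} {M : Type} [AddCommGroup M] [Module ℂ M]

def genWtSpace (A : AHMod n q M) (t : ℕ → ℂ) : Submodule ℂ M :=
  ⨅ (j : ℕ) (_ : 1 ≤ j) (_ : j ≤ n), (A.x j).maxGenEigenspace (t j)

theorem genWt_iff_mem_maxGenEigenspace (A : AHMod n q M) (t : ℕ → ℂ) (m : M) :
    A.genWt t m ↔ ∀ j, 1 ≤ j → j ≤ n → m ∈ (A.x j).maxGenEigenspace (t j) := by
  simp only [genWt, Module.End.mem_maxGenEigenspace]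
  refine forall₃_congr fun j _ _ => ⟨fun ⟨k, _, hk⟩ => ⟨k, hk⟩, fun ⟨k, hk⟩ => ?_⟩
  exact ⟨k + 1, k.succ_pos, Module.End.pow_map_zero_of_le k.le_succ hk⟩

theorem genWt_iff_mem_genWtSpace (A : AHMod n q M) (t : ℕ → ℂ) (m : M) :
    A.genWt t m ↔ m ∈ A.genWtSpace t := by
  simp only [genWt_iff_mem_maxGenEigenspace, genWtSpace, Submodule.mem_iInf]

theorem mapsTo_genWtSpace (A : AHMod n q M) (t : ℕ → ℂ) {j : ℕ} (hj1 : 1 ≤ j)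
    (hjn : j ≤ n) :
    Set.MapsTo (A.x j) (A.genWtSpace t) (A.genWtSpace t) := by
  intro m hm
  simp only [SetLike.mem_coe, genWtSpace, Submodule.mem_iInf] at hm ⊢
  exact fun k hk1 hkn => Module.End.mapsTo_maxGenEigenspace_of_comm
    (A.comm_xx k j hk1 hkn hj1 hjn) (t k) (hm k hk1 hkn)

theorem existsUnique_genWt_sub_apply_eq [FiniteDimensional ℂ M] (A : AHMod n q M) {i : ℕ}
    (hi1 : 1 ≤ i) (hin : i ≤ n - 1) {t : ℕ → ℂ} (hti : t i ≠ t (i + 1)) {m : M}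
    (hm : A.genWt t m) : ∃! u, A.genWt t u ∧ (A.x (i + 1) - A.x i) u = m := by
  have hXY : Commute (A.x (i + 1)) (A.x i) :=
    A.comm_xx (i + 1) i (by omega) (by omega) hi1 (by omega)
  have hD : Set.MapsTo (A.x (i + 1) - A.x i) (A.genWtSpace t) (A.genWtSpace t) := fun v hv =>
    Submodule.sub_mem _ (A.mapsTo_genWtSpace t (by omega) (by omega) hv)
      (A.mapsTo_genWtSpace t hi1 (by omega) hv)
  have hW : A.genWtSpace t ≤ (A.x (i + 1) - A.x i).maxGenEigenspace (t (i + 1) - t i) := by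
    intro v hv
    rw [← genWt_iff_mem_genWtSpace, genWt_iff_mem_maxGenEigenspace] at hv
    exact Module.End.maxGenEigenspace_inf_le_sub hXY _ _
      ⟨hv (i + 1) (by omega) (by omega), hv i hi1 (by omega)⟩
  simpa only [genWt_iff_mem_genWtSpace] using
    Module.End.existsUnique_apply_eq_of_le_maxGenEigenspace hD (sub_ne_zero.mpr hti.symm) hW
      ((A.genWt_iff_mem_genWtSpace t m).mp hm)

theorem genWt_swapW_intertwiner (A : AHMod n q M) {i : ℕ} (hi1 : 1 ≤ i) (hin : i ≤ n - 1)
    {t : ℕ → ℂ} {u : M} (hu : A.genWt t u) :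
    A.genWt (swapW i t) (intertwiner (q - q⁻¹) (A.T i) (A.x i) (A.x (i + 1)) u) := by
  have hT := A.quad i hi1 hin
  have hY := A.xsucc i hi1 (by omega)
  have hXY : Commute (A.x i) (A.x (i + 1)) :=
    A.comm_xx i (i + 1) hi1 (by omega) (by omega) (by omega)
  rw [genWt_iff_mem_maxGenEigenspace] at hu ⊢
  intro j hj1 hjn
  by_cases hji : j = i
  · subst hji
    simpa [swapW] using Module.End.apply_mem_maxGenEigenspace_of_semiconjBy
      (intertwiner_mul_conj hT hY hXY) (hu (j + 1) (by omega) (by omega))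
  by_cases hji' : j = i + 1
  · subst hji'
    simpa [swapW] using Module.End.apply_mem_maxGenEigenspace_of_semiconjBy
      (intertwiner_mul hT hY hXY) (hu i hi1 (by omega))
  have hσ : Commute (A.x j) (intertwiner (q - q⁻¹) (A.T i) (A.x i) (A.x (i + 1))) :=
    Commute.intertwiner (A.comm_xT j i hj1 hjn hi1 hin (by omega) (by omega))
      (A.comm_xx j i hj1 hjn hi1 (by omega)) (A.comm_xx j (i + 1) hj1 hjn (by omega) (by omega))
  simpa [swapW, hji, hji'] using
    Module.End.apply_mem_maxGenEigenspace_of_semiconjBy hσ.symm (hu j hj1 hjn)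

end AHMod

theorem tau_well_defined_general
    (n : ℕ) (q : ℂ)
    (M : Type) [AddCommGroup M] [Module ℂ M] [FiniteDimensional ℂ M]
    (A : AHMod n q M)
    (i : ℕ) (hi1 : 1 ≤ i) (hin : i ≤ n - 1)
    (t : ℕ → ℂ) (hti : t i ≠ t (i + 1)) :
    (∀ m, A.genWt t m → ∃! u, A.genWt t u ∧ (A.x (i + 1) - A.x i) u = m) ∧
    (∀ m u, A.genWt t m → A.genWt t u → (A.x (i + 1) - A.x i) u = m →
      A.genWt (swapW i t) (A.T i m - (q - q⁻¹) • (A.x (i + 1)) u)) := by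
  refine ⟨fun m hm => A.existsUnique_genWt_sub_apply_eq hi1 hin hti hm, fun m u _ hu hum => ?_⟩
  have hτ : A.T i m - (q - q⁻¹) • A.x (i + 1) u =
      intertwiner (q - q⁻¹) (A.T i) (A.x i) (A.x (i + 1)) u := by
    simp [intertwiner, ← hum]
  rw [hτ]
  exact A.genWt_swapW_intertwiner hi1 hin hu

/-- For a finite-dimensional `H̃_n`-module `M` and `t ∈ (ℂ^×)^n` with
`t_i ≠ t_{i+1}`, the operator `x_{i+1} - x_i` is invertible on the generalized weight
space `M_t^gen` (so `τ_i` is well defined there), and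
`τ_i m = (T_i - (q - q⁻¹) x_{i+1} (x_{i+1} - x_i)⁻¹) m` lies in `M_{s_i t}^gen`. -/
theorem tau_well_defined
    (n : ℕ) (q : ℂ) (hq0 : q ≠ 0) (hq : ∀ k : ℕ, 0 < k → q ^ k ≠ 1)
    (M : Type) [AddCommGroup M] [Module ℂ M] [FiniteDimensional ℂ M]
    (A : AHMod n q M)
    (i : ℕ) (hi1 : 1 ≤ i) (hin : i ≤ n - 1)
    (t : ℕ → ℂ) (ht0 : ∀ j, 1 ≤ j → j ≤ n → t j ≠ 0) (hti : t i ≠ t (i + 1)) :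
    (∀ m, A.genWt t m → ∃! u, A.genWt t u ∧ (A.x (i + 1) - A.x i) u = m) ∧
    (∀ m u, A.genWt t m → A.genWt t u → (A.x (i + 1) - A.x i) u = m →
      A.genWt (swapW i t) (A.T i m - (q - q⁻¹) • (A.x (i + 1)) u)) :=
  tau_well_defined_general n q M A i hi1 hin t hti
end

section
/- Let M be a finite-dimensional H̃_n-module. The operators τ_i satisfy, whenever both sides are well defined: (1) x_i τ_i = τ_i x_{i+1}, x_{i+1} τ_i = τ_i x_i, and x_j τ_i = τ_i x_j for j ≠ i, i+1, as maps M_t^gen → M_{s_it}^gen; (2) on M_t^gen with t_i ≠ t_{i+1}, τ_i τ_i acts as the operator (q x_{i+1} − q^{−1} x_i)(q x_i − q^{−1} x_{i+1}) (x_{i+1} − x_i)^{−1} (x_i − x_{i+1})^{−1}; (3) τ_i τ_j = τ_j τ_i for |i−j| > 1; and (4) τ_i τ_{i+1} τ_i = τ_{i+1} τ_i τ_{i+1} for 1 ≤ i ≤ n−2. -/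
open scoped Classical

noncomputable section TauAux
namespace TauAux

section absring
variable {R : Type*} [Ring R] [Algebra ℂ R]

lemma Lphi1 (q : ℂ) (a X Y : R) (hXY : X*Y = Y*X)
    (h1 : a*Y = X*a + (q - q⁻¹)•Y) (h2 : a*X = Y*a - (q - q⁻¹)•Y) :
    X * (a*(Y-X) - (q - q⁻¹)•Y) = (a*(Y-X) - (q - q⁻¹)•Y) * Y := by
  have v1 : ∀ w : R, a*(Y*w) = X*(a*w) + (q - q⁻¹)•(Y*w) := by
    intro w; rw [← mul_assoc, h1, add_mul, smul_mul_assoc, mul_assoc]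
  have v2 : ∀ w : R, a*(X*w) = Y*(a*w) - (q - q⁻¹)•(Y*w) := by
    intro w; rw [← mul_assoc, h2, sub_mul, smul_mul_assoc, mul_assoc]
  have hYX : Y*X = X*Y := hXY.symm
  have s1 : ∀ w : R, Y*(X*w) = X*(Y*w) := by
    intro w; rw [← mul_assoc, hYX, mul_assoc]
  simp only [mul_sub, sub_mul, mul_add, add_mul, smul_mul_assoc, mul_smul_comm, smul_sub,
    smul_add, smul_smul, mul_assoc, h1, h2, v1, v2, hYX, s1]
  module

lemma Lphi2 (q : ℂ) (a X Y : R) (hXY : X*Y = Y*X)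
    (h1 : a*Y = X*a + (q - q⁻¹)•Y) (h2 : a*X = Y*a - (q - q⁻¹)•Y) :
    Y * (a*(Y-X) - (q - q⁻¹)•Y) = (a*(Y-X) - (q - q⁻¹)•Y) * X := by
  have v1 : ∀ w : R, a*(Y*w) = X*(a*w) + (q - q⁻¹)•(Y*w) := by
    intro w; rw [← mul_assoc, h1, add_mul, smul_mul_assoc, mul_assoc]
  have v2 : ∀ w : R, a*(X*w) = Y*(a*w) - (q - q⁻¹)•(Y*w) := by
    intro w; rw [← mul_assoc, h2, sub_mul, smul_mul_assoc, mul_assoc]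
  have hYX : Y*X = X*Y := hXY.symm
  have s1 : ∀ w : R, Y*(X*w) = X*(Y*w) := by
    intro w; rw [← mul_assoc, hYX, mul_assoc]
  simp only [mul_sub, sub_mul, mul_add, add_mul, smul_mul_assoc, mul_smul_comm, smul_sub,
    smul_add, smul_smul, mul_assoc, h1, h2, v1, v2, hYX, s1]
  module

lemma Lphi3 (q : ℂ) (a X Y W : R) (hWa : W*a = a*W) (hWX : W*X = X*W) (hWY : W*Y = Y*W) :
    W * (a*(Y-X) - (q - q⁻¹)•Y) = (a*(Y-X) - (q - q⁻¹)•Y) * W := by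
  have s1 : ∀ w : R, W*(a*w) = a*(W*w) := by
    intro w; rw [← mul_assoc, hWa, mul_assoc]
  have s2 : ∀ w : R, W*(X*w) = X*(W*w) := by
    intro w; rw [← mul_assoc, hWX, mul_assoc]
  have s3 : ∀ w : R, W*(Y*w) = Y*(W*w) := by
    intro w; rw [← mul_assoc, hWY, mul_assoc]
  simp only [mul_sub, sub_mul, mul_add, add_mul, smul_mul_assoc, mul_smul_comm, smul_sub,
    smul_add, smul_smul, mul_assoc, hWa, hWX, hWY, s1, s2, s3]

lemma Lsq (q : ℂ) (hq0 : q ≠ 0) (a X Y : R) (hXY : X*Y = Y*X)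
    (haa : a*a = (q - q⁻¹)•a + 1)
    (h1 : a*Y = X*a + (q - q⁻¹)•Y) (h2 : a*X = Y*a - (q - q⁻¹)•Y) :
    (a*(Y-X) - (q - q⁻¹)•Y) * (a*(Y-X) - (q - q⁻¹)•Y) = (q•Y - q⁻¹•X)*(q•X - q⁻¹•Y) := by
  have v1 : ∀ w : R, a*(Y*w) = X*(a*w) + (q - q⁻¹)•(Y*w) := by
    intro w; rw [← mul_assoc, h1, add_mul, smul_mul_assoc, mul_assoc]
  have v2 : ∀ w : R, a*(X*w) = Y*(a*w) - (q - q⁻¹)•(Y*w) := by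
    intro w; rw [← mul_assoc, h2, sub_mul, smul_mul_assoc, mul_assoc]
  have va : ∀ w : R, a*(a*w) = (q - q⁻¹)•(a*w) + w := by
    intro w; rw [← mul_assoc, haa, add_mul, smul_mul_assoc, one_mul]
  have hYX : Y*X = X*Y := hXY.symm
  have s1 : ∀ w : R, Y*(X*w) = X*(Y*w) := by
    intro w; rw [← mul_assoc, hYX, mul_assoc]
  simp only [mul_sub, sub_mul, mul_add, add_mul, smul_mul_assoc, mul_smul_comm, smul_sub,
    smul_add, smul_smul, mul_assoc, h1, h2, haa, v1, v2, va, hYX, s1, mul_one, one_mul]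
  have hq1 : q * q⁻¹ = 1 := mul_inv_cancel₀ hq0
  match_scalars <;> first | ring1 | linear_combination hq1 | linear_combination (-2:ℂ)*hq1

lemma Lcomm (q : ℂ) (a X Y b Z W : R)
    (h1 : a*b = b*a) (h2 : a*Z = Z*a) (h3 : a*W = W*a)
    (h4 : X*b = b*X) (h5 : Y*b = b*Y)
    (h6 : X*Z = Z*X) (h7 : X*W = W*X) (h8 : Y*Z = Z*Y) (h9 : Y*W = W*Y) :
    (a*(Y-X) - (q - q⁻¹)•Y) * (b*(W-Z) - (q - q⁻¹)•W)
      = (b*(W-Z) - (q - q⁻¹)•W) * (a*(Y-X) - (q - q⁻¹)•Y) := by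
  have g1 : b*a = a*b := h1.symm
  have g2 : Z*a = a*Z := h2.symm
  have g3 : W*a = a*W := h3.symm
  have g4 : b*X = X*b := h4.symm
  have g5 : b*Y = Y*b := h5.symm
  have g6 : Z*X = X*Z := h6.symm
  have g7 : W*X = X*W := h7.symm
  have g8 : Z*Y = Y*Z := h8.symm
  have g9 : W*Y = Y*W := h9.symm
  have s1 : ∀ w : R, b*(a*w) = a*(b*w) := fun w => by rw [← mul_assoc, g1, mul_assoc]
  have s2 : ∀ w : R, Z*(a*w) = a*(Z*w) := fun w => by rw [← mul_assoc, g2, mul_assoc]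
  have s3 : ∀ w : R, W*(a*w) = a*(W*w) := fun w => by rw [← mul_assoc, g3, mul_assoc]
  have s4 : ∀ w : R, b*(X*w) = X*(b*w) := fun w => by rw [← mul_assoc, g4, mul_assoc]
  have s5 : ∀ w : R, b*(Y*w) = Y*(b*w) := fun w => by rw [← mul_assoc, g5, mul_assoc]
  have s6 : ∀ w : R, Z*(X*w) = X*(Z*w) := fun w => by rw [← mul_assoc, g6, mul_assoc]
  have s7 : ∀ w : R, W*(X*w) = X*(W*w) := fun w => by rw [← mul_assoc, g7, mul_assoc]
  have s8 : ∀ w : R, Z*(Y*w) = Y*(Z*w) := fun w => by rw [← mul_assoc, g8, mul_assoc]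
  have s9 : ∀ w : R, W*(Y*w) = Y*(W*w) := fun w => by rw [← mul_assoc, g9, mul_assoc]
  simp only [mul_sub, sub_mul, mul_add, add_mul, smul_mul_assoc, mul_smul_comm, smul_sub,
    smul_add, smul_smul, mul_assoc, g1, g2, g3, g4, g5, g6, g7, g8, g9,
    s1, s2, s3, s4, s5, s6, s7, s8, s9]
  try module

lemma Lbraid (q : ℂ) (a b X Y Z : R)
    (hXY : X*Y = Y*X) (hXZ : X*Z = Z*X) (hYZ : Y*Z = Z*Y)
    (haa : a*a = (q - q⁻¹)•a + 1) (hbb : b*b = (q - q⁻¹)•b + 1)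
    (hbr : a*b*a = b*a*b)
    (h1 : a*Y = X*a + (q - q⁻¹)•Y) (h2 : a*X = Y*a - (q - q⁻¹)•Y)
    (h3 : a*Z = Z*a) (h4 : b*X = X*b)
    (h5 : b*Z = Y*b + (q - q⁻¹)•Z) (h6 : b*Y = Z*b - (q - q⁻¹)•Z) :
    (a*(Y-X) - (q - q⁻¹)•Y) * ((b*(Z-Y) - (q - q⁻¹)•Z) * (a*(Y-X) - (q - q⁻¹)•Y))
      = (b*(Z-Y) - (q - q⁻¹)•Z) * ((a*(Y-X) - (q - q⁻¹)•Y) * (b*(Z-Y) - (q - q⁻¹)•Z)) := by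
  have v1 : ∀ w : R, a*(Y*w) = X*(a*w) + (q - q⁻¹)•(Y*w) := fun w => by
    rw [← mul_assoc, h1, add_mul, smul_mul_assoc, mul_assoc]
  have v2 : ∀ w : R, a*(X*w) = Y*(a*w) - (q - q⁻¹)•(Y*w) := fun w => by
    rw [← mul_assoc, h2, sub_mul, smul_mul_assoc, mul_assoc]
  have v3 : ∀ w : R, a*(Z*w) = Z*(a*w) := fun w => by rw [← mul_assoc, h3, mul_assoc]
  have v4 : ∀ w : R, b*(X*w) = X*(b*w) := fun w => by rw [← mul_assoc, h4, mul_assoc]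
  have v5 : ∀ w : R, b*(Z*w) = Y*(b*w) + (q - q⁻¹)•(Z*w) := fun w => by
    rw [← mul_assoc, h5, add_mul, smul_mul_assoc, mul_assoc]
  have v6 : ∀ w : R, b*(Y*w) = Z*(b*w) - (q - q⁻¹)•(Z*w) := fun w => by
    rw [← mul_assoc, h6, sub_mul, smul_mul_assoc, mul_assoc]
  have va : ∀ w : R, a*(a*w) = (q - q⁻¹)•(a*w) + w := fun w => by
    rw [← mul_assoc, haa, add_mul, smul_mul_assoc, one_mul]
  have vb : ∀ w : R, b*(b*w) = (q - q⁻¹)•(b*w) + w := fun w => by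
    rw [← mul_assoc, hbb, add_mul, smul_mul_assoc, one_mul]
  have hYX : Y*X = X*Y := hXY.symm
  have hZX : Z*X = X*Z := hXZ.symm
  have hZY : Z*Y = Y*Z := hYZ.symm
  have s1 : ∀ w : R, Y*(X*w) = X*(Y*w) := fun w => by rw [← mul_assoc, hYX, mul_assoc]
  have s2 : ∀ w : R, Z*(X*w) = X*(Z*w) := fun w => by rw [← mul_assoc, hZX, mul_assoc]
  have s3 : ∀ w : R, Z*(Y*w) = Y*(Z*w) := fun w => by rw [← mul_assoc, hZY, mul_assoc]
  have hbr' : b*(a*b) = a*(b*a) := by rw [← mul_assoc, ← hbr, mul_assoc]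
  have vbr : ∀ w : R, b*(a*(b*w)) = a*(b*(a*w)) := fun w => by
    calc b*(a*(b*w)) = b*a*b*w := by rw [mul_assoc, mul_assoc]
    _ = a*b*a*w := by rw [hbr]
    _ = a*(b*(a*w)) := by rw [mul_assoc, mul_assoc]
  simp only [mul_sub, sub_mul, mul_add, add_mul, smul_mul_assoc, mul_smul_comm, smul_sub,
    smul_add, smul_smul, mul_assoc, h1, h2, h3, h4, h5, h6, v1, v2, v3, v4, v5, v6,
    haa, hbb, va, vb, hYX, hZX, hZY, s1, s2, s3, hbr', vbr, mul_one, one_mul]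
  module

end absring
end TauAux
namespace TauAux

section mod
variable {n : ℕ} {q : ℂ} {M : Type} [AddCommGroup M] [Module ℂ M]

/-- The intertwining operator `φ_i = T_i (x_{i+1} - x_i) - (q - q⁻¹) x_{i+1}`. -/
def PHI (A : AHMod n q M) (i : ℕ) : Module.End ℂ M :=
  A.T i * (A.x (i+1) - A.x i) - (q - q⁻¹) • A.x (i+1)

variable (A : AHMod n q M)

lemma Txsucc (i : ℕ) (h1 : 1 ≤ i) (h2 : i ≤ n - 1) :
    A.T i * A.x (i+1) = A.x i * A.T i + (q - q⁻¹) • A.x (i+1) := by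
  have hn : i + 1 ≤ n := by omega
  have hx := A.xsucc i h1 hn
  have hq := A.quad i h1 h2
  have e1 : A.T i * A.x (i+1) = (A.T i * A.T i) * (A.x i * A.T i) := by
    rw [hx]; noncomm_ring
  rw [e1, hq, add_mul, smul_mul_assoc, one_mul,
    show A.T i * (A.x i * A.T i) = A.T i * A.x i * A.T i from (mul_assoc _ _ _).symm,
    ← hx, add_comm]

lemma xsuccT (i : ℕ) (h1 : 1 ≤ i) (h2 : i ≤ n - 1) :
    A.x (i+1) * A.T i = A.T i * A.x i + (q - q⁻¹) • A.x (i+1) := by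
  have hn : i + 1 ≤ n := by omega
  have hx := A.xsucc i h1 hn
  have hq := A.quad i h1 h2
  have e1 : A.x (i+1) * A.T i = (A.T i * A.x i) * (A.T i * A.T i) := by
    rw [hx]; noncomm_ring
  rw [e1, hq, mul_add, mul_smul_comm, mul_one, ← hx, add_comm]

lemma Txi (i : ℕ) (h1 : 1 ≤ i) (h2 : i ≤ n - 1) :
    A.T i * A.x i = A.x (i+1) * A.T i - (q - q⁻¹) • A.x (i+1) := by
  rw [xsuccT A i h1 h2]; abel

lemma x_phi_lt (i : ℕ) (h1 : 1 ≤ i) (h2 : i ≤ n - 1) :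
    A.x i * PHI A i = PHI A i * A.x (i+1) :=
  Lphi1 q (A.T i) (A.x i) (A.x (i+1))
    (A.comm_xx i (i+1) h1 (by omega) (by omega) (by omega))
    (Txsucc A i h1 h2) (Txi A i h1 h2)

lemma x_phi_gt (i : ℕ) (h1 : 1 ≤ i) (h2 : i ≤ n - 1) :
    A.x (i+1) * PHI A i = PHI A i * A.x i :=
  Lphi2 q (A.T i) (A.x i) (A.x (i+1))
    (A.comm_xx i (i+1) h1 (by omega) (by omega) (by omega))
    (Txsucc A i h1 h2) (Txi A i h1 h2)

lemma x_phi_other (i j : ℕ) (h1 : 1 ≤ i) (h2 : i ≤ n - 1)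
    (hj1 : 1 ≤ j) (hjn : j ≤ n) (hne1 : j ≠ i) (hne2 : j ≠ i + 1) :
    A.x j * PHI A i = PHI A i * A.x j :=
  Lphi3 q (A.T i) (A.x i) (A.x (i+1)) (A.x j)
    (A.comm_xT j i hj1 hjn h1 h2 (fun h => hne2 h.symm) (fun h => hne1 h.symm))
    (A.comm_xx j i hj1 hjn h1 (by omega))
    (A.comm_xx j (i+1) hj1 hjn (by omega) (by omega))

lemma x_phi_swapEnt (i j : ℕ) (h1 : 1 ≤ i) (h2 : i ≤ n - 1) (hj1 : 1 ≤ j) (hjn : j ≤ n) :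
    A.x j * PHI A i = PHI A i * A.x (swapEnt i j) := by
  unfold swapEnt
  by_cases hji : j = i
  · subst hji; simp only [if_pos rfl]; exact x_phi_lt A j h1 h2
  · by_cases hji' : j = i + 1
    · subst hji'; simp only [if_neg hji, if_pos rfl]; exact x_phi_gt A i h1 h2
    · simp only [if_neg hji, if_neg hji']; exact x_phi_other A i j h1 h2 hj1 hjn hji hji'

/-- A higher power also annihilates. -/
lemma pow_ann_mono {f : Module.End ℂ M} {m : M} {k l : ℕ} (h : (f^k) m = 0) (hkl : k ≤ l) :
    (f^l) m = 0 := by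
  obtain ⟨d, rfl⟩ := Nat.exists_eq_add_of_le hkl
  rw [add_comm, pow_add, Module.End.mul_apply, h, map_zero]

lemma genWt_sub {t : ℕ → ℂ} {m m' : M} (h : A.genWt t m) (h' : A.genWt t m') :
    A.genWt t (m - m') := by
  intro i hi hin
  obtain ⟨k, hk, hk0⟩ := h i hi hin
  obtain ⟨l, hl, hl0⟩ := h' i hi hin
  refine ⟨k + l, by omega, ?_⟩
  rw [map_sub, pow_ann_mono hk0 (by omega), pow_ann_mono hl0 (by omega), sub_zero]

lemma genWt_map {t t' : ℕ → ℂ} {m : M} (f : Module.End ℂ M) (σ : ℕ → ℕ)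
    (hσ : ∀ j, 1 ≤ j → j ≤ n → 1 ≤ σ j ∧ σ j ≤ n)
    (hc : ∀ j, 1 ≤ j → j ≤ n → A.x j * f = f * A.x (σ j))
    (ht : ∀ j, 1 ≤ j → j ≤ n → t' j = t (σ j))
    (hm : A.genWt t m) : A.genWt t' (f m) := by
  intro j hj hjn
  obtain ⟨k, hk, h0⟩ := hm (σ j) (hσ j hj hjn).1 (hσ j hj hjn).2
  refine ⟨k, hk, ?_⟩
  have step : (A.x j - t' j • 1) * f = f * (A.x (σ j) - t (σ j) • 1) := by
    rw [sub_mul, mul_sub, hc j hj hjn, ht j hj hjn, smul_mul_assoc, mul_smul_comm,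
      one_mul, mul_one]
  have hpow : ∀ p : ℕ, (A.x j - t' j • 1)^p * f = f * (A.x (σ j) - t (σ j) • 1)^p := by
    intro p
    induction p with
    | zero => rw [pow_zero, pow_zero, one_mul, mul_one]
    | succ p ih =>
        rw [pow_succ, pow_succ, mul_assoc, step, ← mul_assoc, ih, mul_assoc]
  calc ((A.x j - t' j • 1)^k) (f m) = ((A.x j - t' j • 1)^k * f) m := by
        rw [Module.End.mul_apply]
    _ = (f * (A.x (σ j) - t (σ j) • 1)^k) m := by rw [hpow]
    _ = f (((A.x (σ j) - t (σ j) • 1)^k) m) := by rw [Module.End.mul_apply]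
    _ = 0 := by rw [h0, map_zero]

lemma genWt_x {t : ℕ → ℂ} {m : M} (j : ℕ) (hj : 1 ≤ j) (hjn : j ≤ n)
    (hm : A.genWt t m) : A.genWt t (A.x j m) := by
  refine genWt_map A (A.x j) id (fun k hk hkn => ⟨hk, hkn⟩)
    (fun k hk hkn => A.comm_xx k j hk hkn hj hjn) (fun k _ _ => rfl) hm

lemma swapW_swapEnt (i : ℕ) (t : ℕ → ℂ) (j : ℕ) : swapW i t j = t (swapEnt i j) := by
  unfold swapW swapEnt
  by_cases h1 : j = i
  · simp [h1]
  · by_cases h2 : j = i + 1 <;> simp [h1, h2]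

lemma genWt_phi {t : ℕ → ℂ} {m : M} (i : ℕ) (h1 : 1 ≤ i) (h2 : i ≤ n - 1)
    (hm : A.genWt t m) : A.genWt (swapW i t) (PHI A i m) := by
  refine genWt_map A (PHI A i) (swapEnt i) ?_
    (fun j hj hjn => x_phi_swapEnt A i j h1 h2 hj hjn)
    (fun j _ _ => swapW_swapEnt i t j) hm
  intro j hj hjn
  unfold swapEnt
  constructor <;> split_ifs <;> omega

/-- Injectivity of `x_k - x_j` on a generalized weight space with `t j ≠ t k`. -/
lemma genWt_inj {t : ℕ → ℂ} (j k : ℕ) (hj1 : 1 ≤ j) (hjn : j ≤ n) (hk1 : 1 ≤ k)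
    (hkn : k ≤ n) (hne : t j ≠ t k) {v : M} (hv : A.genWt t v)
    (h0 : (A.x k - A.x j) v = 0) : v = 0 := by
  obtain ⟨p, hp, hpv⟩ := hv j hj1 hjn
  obtain ⟨r, hr, hrv⟩ := hv k hk1 hkn
  set B := A.x k - t k • (1 : Module.End ℂ M) with hB
  set Aop := A.x j - t j • (1 : Module.End ℂ M) with hA
  set w := B - Aop with hw
  have hwv : w v = (t j - t k) • v := by
    have e : w = (A.x k - A.x j) - (t k - t j) • (1 : Module.End ℂ M) := by
      rw [hw, hB, hA, sub_smul]; abel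
    rw [e, LinearMap.sub_apply, h0, zero_sub, LinearMap.smul_apply, Module.End.one_apply,
      ← neg_smul]
    ring_nf
  have hcomm : Commute Aop B := by
    have c1 : Commute (A.x j) (A.x k) := A.comm_xx j k hj1 hjn hk1 hkn
    have c2 : Commute (A.x j) (t k • (1 : Module.End ℂ M)) :=
      ((Commute.one_right (A.x j)).smul_right _)
    have c3 : Commute (t j • (1 : Module.End ℂ M)) (A.x k) :=
      ((Commute.one_left (A.x k)).smul_left _)
    have c4 : Commute (t j • (1 : Module.End ℂ M)) (t k • (1 : Module.End ℂ M)) :=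
      (((Commute.one_left (1 : Module.End ℂ M)).smul_left _).smul_right _)
    exact (c1.sub_right c2).sub_left (c3.sub_right c4)
  have hpowv : ∀ m : ℕ, (w^m) v = (t j - t k)^m • v := by
    intro m
    induction m with
    | zero => rw [pow_zero, pow_zero, Module.End.one_apply, one_smul]
    | succ m ih =>
        rw [pow_succ', pow_succ', Module.End.mul_apply, ih, map_smul, hwv, smul_smul]
        congr 1
        ring
  have hw0 : (w^(p+r)) v = 0 := by
    have hC : Commute (-Aop) B := hcomm.neg_left
    have hwe : w = -Aop + B := by rw [hw]; abel
    rw [hwe, hC.add_pow (p+r), LinearMap.sum_apply]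
    refine Finset.sum_eq_zero ?_
    intro m hm
    rw [Finset.mem_range] at hm
    by_cases hmp : m ≤ p
    · -- then p + r - m ≥ r, so B-power kills
      have hBv : (B^(p+r-m)) v = 0 := pow_ann_mono hrv (by omega)
      rw [Module.End.mul_apply, Module.End.mul_apply, Module.End.natCast_apply,
        map_nsmul, hBv, smul_zero, map_zero]
    · -- m > p : move (-Aop)^m to the right
      have hAv : ((-Aop)^m) v = 0 := by
        rw [neg_pow, Module.End.mul_apply, pow_ann_mono hpv (by omega), map_zero]
      have ccomm : Commute ((-Aop)^m)
          (B^(p+r-m) * ((p+r).choose m : Module.End ℂ M)) :=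
        (hC.pow_pow _ _).mul_right ((Nat.cast_commute _ _).symm)
      have e : (-Aop)^m * B^(p+r-m) * ((p+r).choose m : Module.End ℂ M)
          = B^(p+r-m) * ((p+r).choose m : Module.End ℂ M) * (-Aop)^m := by
        rw [mul_assoc, ccomm.eq]
      rw [e, Module.End.mul_apply, hAv, map_zero]
  have := hpowv (p + r)
  rw [hw0] at this
  have hd : (t j - t k) ≠ 0 := sub_ne_zero.mpr hne
  have hdp : (t j - t k)^(p+r) ≠ 0 := pow_ne_zero _ hd
  rcases smul_eq_zero.mp this.symm with h | h
  · exact absurd h hdp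
  · exact h

end mod
end TauAux
namespace TauAux

section tau
variable {n : ℕ} {q : ℂ} {M : Type} [AddCommGroup M] [Module ℂ M] (A : AHMod n q M)

lemma apply_op_eq {f g h : Module.End ℂ M} (hfg : f * g = g * h) (w : M) :
    f (g w) = g (h w) := by
  rw [← Module.End.mul_apply, hfg, Module.End.mul_apply]

lemma genWt_D {t : ℕ → ℂ} {v : M} (j k : ℕ) (hj1 : 1 ≤ j) (hjn : j ≤ n)
    (hk1 : 1 ≤ k) (hkn : k ≤ n) (hv : A.genWt t v) :
    A.genWt t ((A.x k - A.x j) v) := by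
  rw [LinearMap.sub_apply]
  exact genWt_sub A (genWt_x A k hk1 hkn hv) (genWt_x A j hj1 hjn hv)

lemma isTau_elim {i : ℕ} {t : ℕ → ℂ} {m m' : M} (h : A.IsTau i t m m') :
    A.genWt t m ∧ ∃ u, A.genWt t u ∧ (A.x (i+1) - A.x i) u = m ∧ m' = PHI A i u := by
  obtain ⟨hm, u, hu, hDu, hm'⟩ := h
  refine ⟨hm, u, hu, hDu, ?_⟩
  rw [hm', ← hDu, PHI]
  simp only [LinearMap.sub_apply, Module.End.mul_apply, LinearMap.smul_apply]

lemma isTau_unique {i : ℕ} {t : ℕ → ℂ} {m m' : M} (h1 : 1 ≤ i) (h2 : i ≤ n - 1)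
    (hne : t i ≠ t (i+1)) (h : A.IsTau i t m m') {u : M} (hu : A.genWt t u)
    (hDu : (A.x (i+1) - A.x i) u = m) : m' = PHI A i u := by
  obtain ⟨hm, u₀, hu₀, hD₀, hphi⟩ := isTau_elim A h
  have h0 : u - u₀ = 0 := by
    refine genWt_inj A i (i+1) h1 (by omega) (by omega) (by omega) hne
      (genWt_sub A hu hu₀) ?_
    rw [map_sub, hDu, hD₀, sub_self]
  have : u = u₀ := by rwa [sub_eq_zero] at h0
  rw [hphi, this]

end tau
end TauAux

namespace TauAux

lemma swapW_comm (i j : ℕ) (h : i + 1 < j) (t : ℕ → ℂ) :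
    swapW i (swapW j t) = swapW j (swapW i t) := by
  funext k
  unfold swapW
  split_ifs <;> first | rfl | omega | (exfalso; omega)

lemma swapW3 (i : ℕ) (t : ℕ → ℂ) :
    swapW (i+1) (swapW i (swapW (i+1) t)) = swapW i (swapW (i+1) (swapW i t)) := by
  funext k
  unfold swapW
  split_ifs <;> first | rfl | omega | (exfalso; omega)

end TauAux


open TauAux
set_option maxHeartbeats 2000000

/-- The identities satisfied by the operators `τ_i`, whenever both sides are
well defined.  The relation `A.IsTau i t m m'` expresses `m' = τ_i m` for `m ∈ M_t^gen`.
(1) `x_i τ_i = τ_i x_{i+1}`, `x_{i+1} τ_i = τ_i x_i`, `x_j τ_i = τ_i x_j` (`j ≠ i, i+1`);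
(2) on `M_t^gen` (`t_i ≠ t_{i+1}`), `τ_i τ_i` acts as
    `(q x_{i+1} - q⁻¹ x_i)(q x_i - q⁻¹ x_{i+1})(x_{i+1} - x_i)⁻¹(x_i - x_{i+1})⁻¹`
    (stated after composing with the invertible operator `(x_{i+1} - x_i)(x_i - x_{i+1})`);
(3) `τ_i τ_j = τ_j τ_i` for `|i - j| > 1`;
(4) `τ_i τ_{i+1} τ_i = τ_{i+1} τ_i τ_{i+1}`. -/
theorem tau_identities
    (n : ℕ) (q : ℂ) (hq0 : q ≠ 0) (hq : ∀ k : ℕ, 0 < k → q ^ k ≠ 1)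
    (M : Type) [AddCommGroup M] [Module ℂ M] [FiniteDimensional ℂ M]
    (A : AHMod n q M) :
    -- (1) interchange identities with the x's
    (∀ i t, 1 ≤ i → i ≤ n - 1 → (∀ j, 1 ≤ j → j ≤ n → t j ≠ 0) → t i ≠ t (i + 1) →
      ∀ m m' a, A.IsTau i t m m' →
        (A.IsTau i t (A.x (i + 1) m) a → A.x i m' = a) ∧
        (A.IsTau i t (A.x i m) a → A.x (i + 1) m' = a) ∧
        (∀ j, 1 ≤ j → j ≤ n → j ≠ i → j ≠ i + 1 →
          A.IsTau i t (A.x j m) a → A.x j m' = a)) ∧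
    -- (2) the square of τ_i
    (∀ i t, 1 ≤ i → i ≤ n - 1 → (∀ j, 1 ≤ j → j ≤ n → t j ≠ 0) → t i ≠ t (i + 1) →
      ∀ m m' m'', A.IsTau i t m m' → A.IsTau i (swapW i t) m' m'' →
        ((A.x (i + 1) - A.x i) * (A.x i - A.x (i + 1))) m'' =
          ((q • A.x (i + 1) - q⁻¹ • A.x i) * (q • A.x i - q⁻¹ • A.x (i + 1))) m) ∧
    -- (3) commutation for |i - j| > 1
    (∀ i j t, 1 ≤ i → i + 1 < j → j ≤ n - 1 →
      (∀ k, 1 ≤ k → k ≤ n → t k ≠ 0) → t i ≠ t (i + 1) → t j ≠ t (j + 1) →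
      ∀ m a b a' b',
        A.IsTau i t m a → A.IsTau j (swapW i t) a b →
        A.IsTau j t m a' → A.IsTau i (swapW j t) a' b' → b = b') ∧
    -- (4) the braid relation
    (∀ i t, 1 ≤ i → i + 1 ≤ n - 1 →
      (∀ k, 1 ≤ k → k ≤ n → t k ≠ 0) →
      t i ≠ t (i + 1) → t i ≠ t (i + 2) → t (i + 1) ≠ t (i + 2) →
      ∀ m a b c a' b' c',
        A.IsTau i t m a → A.IsTau (i + 1) (swapW i t) a b →
        A.IsTau i (swapW (i + 1) (swapW i t)) b c →
        A.IsTau (i + 1) t m a' → A.IsTau i (swapW (i + 1) t) a' b' →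
        A.IsTau (i + 1) (swapW i (swapW (i + 1) t)) b' c' → c = c') := by
  refine ⟨?_, ?_, ?_, ?_⟩
  · -- (1)
    intro i t hi1 hi2 _ hne m m' a hτ
    obtain ⟨hm, u, hu, hDu, hm'⟩ := isTau_elim A hτ
    have hcomDx : ∀ j : ℕ, 1 ≤ j → j ≤ n →
        (A.x (i+1) - A.x i) * A.x j = A.x j * (A.x (i+1) - A.x i) := by
      intro j hj hjn
      rw [sub_mul, mul_sub, A.comm_xx (i+1) j (by omega) (by omega) hj hjn,
        A.comm_xx i j (by omega) (by omega) hj hjn]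
    refine ⟨?_, ?_, ?_⟩
    · intro ha
      have hDu' : (A.x (i+1) - A.x i) (A.x (i+1) u) = A.x (i+1) m := by
        rw [apply_op_eq (hcomDx (i+1) (by omega) (by omega)), hDu]
      have := isTau_unique A hi1 hi2 hne ha
        (genWt_x A (i+1) (by omega) (by omega) hu) hDu'
      rw [this, hm', apply_op_eq (x_phi_lt A i hi1 hi2)]
    · intro ha
      have hDu' : (A.x (i+1) - A.x i) (A.x i u) = A.x i m := by
        rw [apply_op_eq (hcomDx i (by omega) (by omega)), hDu]
      have := isTau_unique A hi1 hi2 hne ha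
        (genWt_x A i (by omega) (by omega) hu) hDu'
      rw [this, hm', apply_op_eq (x_phi_gt A i hi1 hi2)]
    · intro j hj hjn hji hji' ha
      have hDu' : (A.x (i+1) - A.x i) (A.x j u) = A.x j m := by
        rw [apply_op_eq (hcomDx j hj hjn), hDu]
      have := isTau_unique A hi1 hi2 hne ha (genWt_x A j hj hjn hu) hDu'
      rw [this, hm', apply_op_eq (x_phi_other A i j hi1 hi2 hj hjn hji hji')]
  · -- (2)
    intro i t hi1 hi2 _ _ m m' m'' hτ1 hτ2
    obtain ⟨hm, u, hu, hDu, hm'⟩ := isTau_elim A hτ1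
    obtain ⟨hm'g, u', hu', hDu', hm''⟩ := isTau_elim A hτ2
    have hDphi : (A.x (i+1) - A.x i) * PHI A i = PHI A i * (A.x i - A.x (i+1)) := by
      rw [sub_mul, x_phi_gt A i hi1 hi2, x_phi_lt A i hi1 hi2, ← mul_sub]
    have hDphi' : (A.x i - A.x (i+1)) * PHI A i = PHI A i * (A.x (i+1) - A.x i) := by
      rw [sub_mul, x_phi_lt A i hi1 hi2, x_phi_gt A i hi1 hi2, ← mul_sub]
    have hsq : PHI A i * PHI A i =
        (q • A.x (i+1) - q⁻¹ • A.x i) * (q • A.x i - q⁻¹ • A.x (i+1)) :=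
      Lsq q hq0 (A.T i) (A.x i) (A.x (i+1))
        (A.comm_xx i (i+1) hi1 (by omega) (by omega) (by omega))
        (A.quad i hi1 hi2) (Txsucc A i hi1 hi2) (Txi A i hi1 hi2)
    rw [Module.End.mul_apply, ← hsq, Module.End.mul_apply]
    rw [hm'', apply_op_eq hDphi', hDu', hm', apply_op_eq hDphi,
      apply_op_eq hDphi', hDu]
  · -- (3)
    intro i j t hi1 hij hjn2 _ hnei hnej m a b a' b' hTa hTb hTa' hTb'
    have hi2 : i ≤ n - 1 := by omega
    have hj1 : 1 ≤ j := by omega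
    obtain ⟨hm, u₁, hu₁, hD₁, ha⟩ := isTau_elim A hTa
    obtain ⟨-, u₂, hu₂, hD₂, hb⟩ := isTau_elim A hTb
    obtain ⟨-, u₁', hu₁', hD₁', ha'⟩ := isTau_elim A hTa'
    obtain ⟨-, u₂', hu₂', hD₂', hb'⟩ := isTau_elim A hTb'
    set P := PHI A i with hP
    set Q := PHI A j with hQ
    set Di := A.x (i+1) - A.x i with hDi
    set Dj := A.x (j+1) - A.x j with hDj
    have hQDi : Di * Q = Q * Di := by
      rw [hDi, sub_mul, mul_sub,
        x_phi_other A j (i+1) hj1 hjn2 (by omega) (by omega) (by omega) (by omega),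
        x_phi_other A j i hj1 hjn2 (by omega) (by omega) (by omega) (by omega)]
    have hPDj : Dj * P = P * Dj := by
      rw [hDj, sub_mul, mul_sub,
        x_phi_other A i (j+1) hi1 hi2 (by omega) (by omega) (by omega) (by omega),
        x_phi_other A i j hi1 hi2 (by omega) (by omega) (by omega) (by omega)]
    have hDiP : Di * P = P * (A.x i - A.x (i+1)) := by
      rw [hDi, sub_mul, x_phi_gt A i hi1 hi2, x_phi_lt A i hi1 hi2, ← mul_sub]
    have hDjQ : Dj * Q = Q * (A.x j - A.x (j+1)) := by
      rw [hDj, sub_mul, x_phi_gt A j hj1 hjn2, x_phi_lt A j hj1 hjn2, ← mul_sub]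
    have hPQ : P * Q = Q * P :=
      Lcomm q (A.T i) (A.x i) (A.x (i+1)) (A.T j) (A.x j) (A.x (j+1))
        (A.comm_TT i j hi1 hjn2 hij)
        ((A.comm_xT j i hj1 (by omega) hi1 hi2 (by omega) (by omega)).symm)
        ((A.comm_xT (j+1) i (by omega) (by omega) hi1 hi2 (by omega) (by omega)).symm)
        (A.comm_xT i j hi1 (by omega) hj1 hjn2 (by omega) (by omega))
        (A.comm_xT (i+1) j (by omega) (by omega) hj1 hjn2 (by omega) (by omega))
        (A.comm_xx i j hi1 (by omega) hj1 (by omega))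
        (A.comm_xx i (j+1) hi1 (by omega) (by omega) (by omega))
        (A.comm_xx (i+1) j (by omega) (by omega) hj1 (by omega))
        (A.comm_xx (i+1) (j+1) (by omega) (by omega) (by omega) (by omega))
    have hneg1 : (A.x i - A.x (i+1)) u₁ = -m := by
      rw [← hD₁, LinearMap.sub_apply, LinearMap.sub_apply, neg_sub]
    have hneg1' : (A.x i - A.x (i+1)) u₂' = -a' := by
      rw [← hD₂', LinearMap.sub_apply, LinearMap.sub_apply, neg_sub]
    have hneg2 : (A.x j - A.x (j+1)) u₂ = -a := by
      rw [← hD₂, LinearMap.sub_apply, LinearMap.sub_apply, neg_sub]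
    have hneg2' : (A.x j - A.x (j+1)) u₁' = -m := by
      rw [← hD₁', LinearMap.sub_apply, LinearMap.sub_apply, neg_sub]
    have key1 : Di (Dj b) = Q (P m) := by
      rw [hb, apply_op_eq hDjQ, hneg2, map_neg, map_neg, ha, apply_op_eq hQDi,
        apply_op_eq hDiP, hneg1]
      simp only [map_neg, neg_neg]
    have key2 : Dj (Di b') = P (Q m) := by
      rw [hb', apply_op_eq hDiP, hneg1', map_neg, map_neg, ha', apply_op_eq hPDj,
        apply_op_eq hDjQ, hneg2']
      simp only [map_neg, neg_neg]
    have hswap : swapW i (swapW j t) = swapW j (swapW i t) := swapW_comm i j hij t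
    have hgb : A.genWt (swapW j (swapW i t)) b := by
      rw [hb]; exact genWt_phi A j hj1 hjn2 hu₂
    have hgb' : A.genWt (swapW j (swapW i t)) b' := by
      rw [hb', ← hswap]; exact genWt_phi A i hi1 hi2 hu₂'
    have cDD : Commute Di Dj := by
      rw [hDi, hDj]
      have c11 : Commute (A.x (i+1)) (A.x (j+1)) :=
        A.comm_xx (i+1) (j+1) (by omega) (by omega) (by omega) (by omega)
      have c10 : Commute (A.x (i+1)) (A.x j) :=
        A.comm_xx (i+1) j (by omega) (by omega) hj1 (by omega)
      have c01 : Commute (A.x i) (A.x (j+1)) :=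
        A.comm_xx i (j+1) hi1 (by omega) (by omega) (by omega)
      have c00 : Commute (A.x i) (A.x j) := A.comm_xx i j hi1 (by omega) hj1 (by omega)
      exact (c11.sub_right c10).sub_left (c01.sub_right c00)
    have hz : Di (Dj (b - b')) = 0 := by
      rw [map_sub, map_sub, key1]
      have e1 : Di (Dj b') = P (Q m) := by rw [apply_op_eq cDD.eq]; exact key2
      rw [e1, apply_op_eq hPQ, sub_self]
    have ev1 : swapW j (swapW i t) i = t (i+1) := by
      unfold swapW; split_ifs <;> first | rfl | omega
    have ev2 : swapW j (swapW i t) (i+1) = t i := by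
      unfold swapW; split_ifs <;> first | rfl | omega
    have ev3 : swapW j (swapW i t) j = t (j+1) := by
      unfold swapW; split_ifs <;> first | rfl | omega
    have ev4 : swapW j (swapW i t) (j+1) = t j := by
      unfold swapW; split_ifs <;> first | rfl | omega
    have hbb : A.genWt (swapW j (swapW i t)) (b - b') := genWt_sub A hgb hgb'
    have step1 : Dj (b - b') = 0 := by
      refine genWt_inj A (t := swapW j (swapW i t)) i (i+1) hi1 (by omega) (by omega) (by omega) ?_ ?_ hz
      · rw [ev1, ev2]; exact hnei.symm
      · rw [hDj]
        exact genWt_D A j (j+1) hj1 (by omega) (by omega) (by omega) hbb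
    have step2 : b - b' = 0 := by
      refine genWt_inj A (t := swapW j (swapW i t)) j (j+1) hj1 (by omega) (by omega) (by omega) ?_ hbb step1
      rw [ev3, ev4]; exact hnej.symm
    exact sub_eq_zero.mp step2
  · -- (4)
    intro i t hi1 hi12 _ hne1 hne2 hne3 m a b c a' b' c' hT1 hT2 hT3 hT1' hT2' hT3'
    have hi2 : i ≤ n - 1 := by omega
    have hj1 : 1 ≤ i + 1 := by omega
    have hn2 : i + 2 ≤ n := by omega
    obtain ⟨hm, u₁, hu₁, hD₁, ha⟩ := isTau_elim A hT1
    obtain ⟨-, u₂, hu₂, hD₂, hbv⟩ := isTau_elim A hT2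
    obtain ⟨-, u₃, hu₃, hD₃, hcv⟩ := isTau_elim A hT3
    obtain ⟨-, v₁, hv₁, hE₁, ha'⟩ := isTau_elim A hT1'
    obtain ⟨-, v₂, hv₂, hE₂, hbv'⟩ := isTau_elim A hT2'
    obtain ⟨-, v₃, hv₃, hE₃, hcv'⟩ := isTau_elim A hT3'
    set P := PHI A i with hP
    set Q := PHI A (i+1) with hQ
    set Di := A.x (i+1) - A.x i with hDi
    set Dj := A.x (i+2) - A.x (i+1) with hDj
    set E := A.x (i+2) - A.x i with hE
    -- x–φ commutation facts, spelled with `i+2`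
    have g1 : A.x (i+2) * P = P * A.x (i+2) :=
      x_phi_other A i (i+2) hi1 hi2 (by omega) (by omega) (by omega) (by omega)
    have g2 : A.x i * Q = Q * A.x i :=
      x_phi_other A (i+1) i hj1 hi12 hi1 (by omega) (by omega) (by omega)
    have g3 : A.x (i+2) * Q = Q * A.x (i+1) := x_phi_gt A (i+1) hj1 hi12
    have g4 : A.x (i+1) * Q = Q * A.x (i+2) := x_phi_lt A (i+1) hj1 hi12
    have rDiP : Di * P = P * (A.x i - A.x (i+1)) := by
      rw [hDi, sub_mul, x_phi_gt A i hi1 hi2, x_phi_lt A i hi1 hi2, ← mul_sub]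
    have rDjQ : Dj * Q = Q * (A.x (i+1) - A.x (i+2)) := by
      rw [hDj, sub_mul, g3, g4, ← mul_sub]
    have rEP : E * P = P * Dj := by
      rw [hE, hDj, sub_mul, g1, x_phi_lt A i hi1 hi2, ← mul_sub]
    have rEQ : E * Q = Q * Di := by
      rw [hE, hDi, sub_mul, g3, g2, ← mul_sub]
    have rDjP : Dj * P = P * E := by
      rw [hDj, hE, sub_mul, g1, x_phi_gt A i hi1 hi2, ← mul_sub]
    have rDiQ : Di * Q = Q * E := by
      rw [hDi, hE, sub_mul, g4, g2, ← mul_sub]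
    -- braid relation for the φ's
    have q5 : A.T (i+1) * A.x (i+2) = A.x (i+1) * A.T (i+1) + (q - q⁻¹) • A.x (i+2) :=
      Txsucc A (i+1) hj1 hi12
    have q6 : A.T (i+1) * A.x (i+1) = A.x (i+2) * A.T (i+1) - (q - q⁻¹) • A.x (i+2) :=
      Txi A (i+1) hj1 hi12
    have hQ2 : Q = A.T (i+1) * (A.x (i+2) - A.x (i+1)) - (q - q⁻¹) • A.x (i+2) := rfl
    have hbrPQ : P * (Q * P) = Q * (P * Q) := by
      rw [hP, hQ2, PHI]
      exact Lbraid q (A.T i) (A.T (i+1)) (A.x i) (A.x (i+1)) (A.x (i+2))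
        (A.comm_xx i (i+1) hi1 (by omega) (by omega) (by omega))
        (A.comm_xx i (i+2) hi1 (by omega) (by omega) (by omega))
        (A.comm_xx (i+1) (i+2) (by omega) (by omega) (by omega) (by omega))
        (A.quad i hi1 hi2) (A.quad (i+1) hj1 hi12)
        (A.braid i hi1 hi12)
        (Txsucc A i hi1 hi2) (Txi A i hi1 hi2)
        ((A.comm_xT (i+2) i (by omega) (by omega) hi1 hi2 (by omega) (by omega)).symm)
        ((A.comm_xT i (i+1) hi1 (by omega) hj1 hi12 (by omega) (by omega)).symm)
        q5 q6
    -- sign computations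
    have hnegm : (A.x i - A.x (i+1)) u₁ = -m := by
      rw [← hD₁, hDi, LinearMap.sub_apply, LinearMap.sub_apply, neg_sub]
    have hnega : (A.x (i+1) - A.x (i+2)) u₂ = -a := by
      rw [← hD₂, hDj, LinearMap.sub_apply, LinearMap.sub_apply, neg_sub]
    have hnegb : (A.x i - A.x (i+1)) u₃ = -b := by
      rw [← hD₃, hDi, LinearMap.sub_apply, LinearMap.sub_apply, neg_sub]
    have hnegm' : (A.x (i+1) - A.x (i+2)) v₁ = -m := by
      rw [← hE₁, hDj, LinearMap.sub_apply, LinearMap.sub_apply, neg_sub]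
    have hnega' : (A.x i - A.x (i+1)) v₂ = -a' := by
      rw [← hE₂, hDi, LinearMap.sub_apply, LinearMap.sub_apply, neg_sub]
    have hnegb' : (A.x (i+1) - A.x (i+2)) v₃ = -b' := by
      rw [← hE₃, hDj, LinearMap.sub_apply, LinearMap.sub_apply, neg_sub]
    -- the two main value computations
    have k1 : Di c = -(P b) := by
      rw [hcv, apply_op_eq rDiP, hnegb, map_neg]
    have k2 : E (Di c) = P (Q a) := by
      rw [k1, map_neg, hbv, apply_op_eq rEP, apply_op_eq rDjQ, hnega]
      simp only [map_neg, neg_neg]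
    have k3 : Dj (E (Di c)) = -(P (Q (P m))) := by
      rw [k2, ha, apply_op_eq rDjP, apply_op_eq rEQ, apply_op_eq rDiP, hnegm]
      simp only [map_neg, neg_neg]
    have k1' : Dj c' = -(Q b') := by
      rw [hcv', apply_op_eq rDjQ, hnegb', map_neg]
    have k2' : E (Dj c') = Q (P a') := by
      rw [k1', map_neg, hbv', apply_op_eq rEQ, apply_op_eq rDiP, hnega']
      simp only [map_neg, neg_neg]
    have k3' : Di (E (Dj c')) = -(Q (P (Q m))) := by
      rw [k2', ha', apply_op_eq rDiQ, apply_op_eq rEP, apply_op_eq rDjQ, hnegm']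
      simp only [map_neg, neg_neg]
    -- commuting the diagonal operators
    have cDiDj : Commute Di Dj := by
      rw [hDi, hDj]
      have c1 : Commute (A.x (i+1)) (A.x (i+2)) :=
        A.comm_xx (i+1) (i+2) (by omega) (by omega) (by omega) hn2
      have c2 : Commute (A.x (i+1)) (A.x (i+1)) := Commute.refl _
      have c3 : Commute (A.x i) (A.x (i+2)) :=
        A.comm_xx i (i+2) hi1 (by omega) (by omega) hn2
      have c4 : Commute (A.x i) (A.x (i+1)) :=
        A.comm_xx i (i+1) hi1 (by omega) (by omega) (by omega)
      exact (c1.sub_right c2).sub_left (c3.sub_right c4)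
    have cDiE : Commute Di E := by
      rw [hDi, hE]
      have c1 : Commute (A.x (i+1)) (A.x (i+2)) :=
        A.comm_xx (i+1) (i+2) (by omega) (by omega) (by omega) hn2
      have c2 : Commute (A.x (i+1)) (A.x i) :=
        A.comm_xx (i+1) i (by omega) (by omega) hi1 (by omega)
      have c3 : Commute (A.x i) (A.x (i+2)) :=
        A.comm_xx i (i+2) hi1 (by omega) (by omega) hn2
      have c4 : Commute (A.x i) (A.x i) := Commute.refl _
      exact (c1.sub_right c2).sub_left (c3.sub_right c4)
    have cDjE : Commute Dj E := by
      rw [hDj, hE]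
      have c1 : Commute (A.x (i+2)) (A.x (i+2)) := Commute.refl _
      have c2 : Commute (A.x (i+2)) (A.x i) :=
        A.comm_xx (i+2) i (by omega) hn2 hi1 (by omega)
      have c3 : Commute (A.x (i+1)) (A.x (i+2)) :=
        A.comm_xx (i+1) (i+2) (by omega) (by omega) (by omega) hn2
      have c4 : Commute (A.x (i+1)) (A.x i) :=
        A.comm_xx (i+1) i (by omega) (by omega) hi1 (by omega)
      exact (c1.sub_right c2).sub_left (c3.sub_right c4)
    have oper : Dj * (E * Di) = Di * (E * Dj) := by
      calc Dj * (E * Di) = Dj * (Di * E) := by rw [← cDiE.eq]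
      _ = Dj * Di * E := by rw [mul_assoc]
      _ = Di * Dj * E := by rw [← cDiDj.eq]
      _ = Di * (Dj * E) := by rw [mul_assoc]
      _ = Di * (E * Dj) := by rw [cDjE.eq]
    have e' : Dj (E (Di c')) = Di (E (Dj c')) := by
      calc Dj (E (Di c')) = (Dj * (E * Di)) c' := by
            rw [Module.End.mul_apply, Module.End.mul_apply]
      _ = (Di * (E * Dj)) c' := by rw [oper]
      _ = Di (E (Dj c')) := by rw [Module.End.mul_apply, Module.End.mul_apply]
    have hbrm : P (Q (P m)) = Q (P (Q m)) := by
      calc P (Q (P m)) = (P * (Q * P)) m := by rw [Module.End.mul_apply, Module.End.mul_apply]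
      _ = (Q * (P * Q)) m := by rw [hbrPQ]
      _ = Q (P (Q m)) := by rw [Module.End.mul_apply, Module.End.mul_apply]
    have hz : Dj (E (Di (c - c'))) = 0 := by
      rw [map_sub, map_sub, map_sub, k3, e', k3', hbrm, sub_self]
    -- weights
    have hswap3' : swapW (i+1) (swapW i (swapW (i+1) t)) = swapW i (swapW (i+1) (swapW i t)) :=
      swapW3 i t
    have hgc : A.genWt (swapW i (swapW (i+1) (swapW i t))) c := by
      rw [hcv]; exact genWt_phi A i hi1 hi2 hu₃
    have hgc' : A.genWt (swapW i (swapW (i+1) (swapW i t))) c' := by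
      rw [hcv', ← hswap3']; exact genWt_phi A (i+1) hj1 hi12 hv₃
    have hvgen : A.genWt (swapW i (swapW (i+1) (swapW i t))) (c - c') := genWt_sub A hgc hgc'
    have evi : swapW i (swapW (i+1) (swapW i t)) i = t (i+2) := by
      unfold swapW; split_ifs <;> first | rfl | omega
    have evi1 : swapW i (swapW (i+1) (swapW i t)) (i+1) = t (i+1) := by
      unfold swapW; split_ifs <;> first | rfl | omega
    have evi2 : swapW i (swapW (i+1) (swapW i t)) (i+2) = t i := by
      unfold swapW; split_ifs <;> first | rfl | omega
    have hgDv : A.genWt (swapW i (swapW (i+1) (swapW i t))) (Di (c - c')) := by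
      rw [hDi]; exact genWt_D A i (i+1) hi1 (by omega) (by omega) (by omega) hvgen
    have hgEDv : A.genWt (swapW i (swapW (i+1) (swapW i t))) (E (Di (c - c'))) := by
      rw [hE]; exact genWt_D A i (i+2) hi1 (by omega) (by omega) hn2 hgDv
    have st1 : E (Di (c - c')) = 0 := by
      refine genWt_inj A (t := swapW i (swapW (i+1) (swapW i t))) (i+1) (i+2) (by omega) (by omega) (by omega) hn2 ?_ hgEDv hz
      rw [evi1, evi2]; exact hne1.symm
    have st2 : Di (c - c') = 0 := by
      refine genWt_inj A (t := swapW i (swapW (i+1) (swapW i t))) i (i+2) hi1 (by omega) (by omega) hn2 ?_ hgDv st1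
      rw [evi, evi2]; exact hne2.symm
    have st3 : c - c' = 0 := by
      refine genWt_inj A (t := swapW i (swapW (i+1) (swapW i t))) i (i+1) hi1 (by omega) (by omega) (by omega) ?_ hvgen st2
      rw [evi, evi1]; exact hne3.symm
    exact sub_eq_zero.mp st3
end TauAux
end

section
/- Let (c, λ/μ) be a placed skew shape with n boxes. Then the H̃_n-module H̃^{(c,λ/μ)} is irreducible and calibrated, and its dimension equals the number of standard tableaux of shape λ/μ. -/
open scoped Classical

noncomputable section Aux

/-! ### Basic cell lemmas -/

lemma cell_sandwich {S : SkewShape} {bA bB : ℕ × ℕ} {r c : ℕ}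
    (hA : bA ∈ S.cells) (hB : bB ∈ S.cells)
    (h1 : bA.1 ≤ r) (h2 : bA.2 ≤ c) (h3 : r ≤ bB.1) (h4 : c ≤ bB.2) : (r, c) ∈ S.cells := by
  rw [SkewShape.mem_cells] at hA hB ⊢
  exact ⟨(S.mu.antitone h1).trans (hA.1.trans h2),
    lt_of_le_of_lt h4 (lt_of_lt_of_le hB.2 (S.lam.antitone h3))⟩

/-! ### Entry monotonicity -/

lemma StdTab.entry_row_lt {S : SkewShape} {off n : ℕ} (L : StdTab S off n) {r c : ℕ}
    (h : (r, c) ∈ S.cells) :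
    ∀ c', (r, c') ∈ S.cells → c < c' → L.entry (r, c) < L.entry (r, c') := by
  intro c'
  induction c' with
  | zero => omega
  | succ d ih =>
    intro h' hc
    rcases Nat.lt_or_ge c d with h2 | h2
    · have hd : (r, d) ∈ S.cells := cell_sandwich h h' le_rfl (by omega) le_rfl (by omega)
      exact lt_trans (ih hd h2) (L.row_inc r d hd h')
    · have : c = d := by omega
      subst this
      exact L.row_inc r c h h'

lemma StdTab.entry_col_lt {S : SkewShape} {off n : ℕ} (L : StdTab S off n) {r c : ℕ}
    (h : (r, c) ∈ S.cells) :
    ∀ r', (r', c) ∈ S.cells → r < r' → L.entry (r, c) < L.entry (r', c) := by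
  intro r'
  induction r' with
  | zero => omega
  | succ d ih =>
    intro h' hr
    rcases Nat.lt_or_ge r d with h2 | h2
    · have hd : (d, c) ∈ S.cells := cell_sandwich h h' (by omega) le_rfl (by omega) le_rfl
      exact lt_trans (ih hd h2) (L.col_inc d c hd h')
    · have : r = d := by omega
      subst this
      exact L.col_inc r c h h'

lemma StdTab.entry_lt {S : SkewShape} {off n : ℕ} (L : StdTab S off n) {b b' : ℕ × ℕ}
    (h : b ∈ S.cells) (h' : b' ∈ S.cells) (hr : b.1 ≤ b'.1) (hc : b.2 ≤ b'.2)
    (hne : b ≠ b') : L.entry b < L.entry b' := by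
  obtain ⟨r, c⟩ := b; obtain ⟨r', c'⟩ := b'
  simp only at hr hc
  rcases Nat.lt_or_ge r r' with h1 | h1
  · rcases Nat.lt_or_ge c c' with h2 | h2
    · have hm : (r, c') ∈ S.cells := cell_sandwich h h' le_rfl (le_of_lt h2) (le_of_lt h1) le_rfl
      exact lt_trans (L.entry_row_lt h c' hm h2) (L.entry_col_lt hm r' h' h1)
    · have : c = c' := le_antisymm hc h2
      subst this
      exact L.entry_col_lt h r' h' h1
  · have : r = r' := le_antisymm hr h1
    subst this
    have : c < c' := by
      rcases Nat.lt_or_ge c c' with h2 | h2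
      · exact h2
      · have hcc : c = c' := le_antisymm hc h2
        exact absurd (by rw [hcc]) hne
    exact L.entry_row_lt h c' h' this

/-! ### Box lemmas -/

lemma StdTab.box_mem {S : SkewShape} {off n : ℕ} (L : StdTab S off n) {i : ℕ}
    (h1 : off + 1 ≤ i) (h2 : i ≤ off + n) : L.box i ∈ S.cells := by
  have hex : ∃ b ∈ (S.cells : Set (ℕ × ℕ)), L.entry b = i := by
    have := L.bijOn.surjOn (Set.mem_Icc.mpr ⟨h1, h2⟩)
    rcases this with ⟨b, hb, hb'⟩
    exact ⟨b, hb, hb'⟩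
  have := Function.invFunOn_mem hex
  simpa [StdTab.box] using this

lemma StdTab.entry_box {S : SkewShape} {off n : ℕ} (L : StdTab S off n) {i : ℕ}
    (h1 : off + 1 ≤ i) (h2 : i ≤ off + n) : L.entry (L.box i) = i := by
  have hex : ∃ b ∈ (S.cells : Set (ℕ × ℕ)), L.entry b = i := by
    have := L.bijOn.surjOn (Set.mem_Icc.mpr ⟨h1, h2⟩)
    rcases this with ⟨b, hb, hb'⟩
    exact ⟨b, hb, hb'⟩
  exact Function.invFunOn_eq hex

lemma StdTab.entry_mem {S : SkewShape} {off n : ℕ} (L : StdTab S off n) {b : ℕ × ℕ}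
    (hb : b ∈ S.cells) : off + 1 ≤ L.entry b ∧ L.entry b ≤ off + n := by
  have := L.bijOn.mapsTo (by simpa using hb)
  exact Set.mem_Icc.mp this

lemma StdTab.box_entry {S : SkewShape} {off n : ℕ} (L : StdTab S off n) {b : ℕ × ℕ}
    (hb : b ∈ S.cells) : L.box (L.entry b) = b := by
  obtain ⟨h1, h2⟩ := L.entry_mem hb
  apply L.bijOn.injOn (by simpa using L.box_mem h1 h2) (by simpa using hb)
  exact L.entry_box h1 h2

lemma StdTab.ext' {S : SkewShape} {off n : ℕ} {L L' : StdTab S off n}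
    (h : L.entry = L'.entry) : L = L' := by
  cases L; cases L'; congr

lemma StdTab.cells_eq_empty {S : SkewShape} {off : ℕ} (L : StdTab S off 0) :
    ∀ b : ℕ × ℕ, b ∉ S.cells := by
  intro b hb
  have := L.entry_mem hb
  omega

/-! ### swapEnt lemmas -/

lemma swapEnt_invol (i k : ℕ) : swapEnt i (swapEnt i k) = k := by
  unfold swapEnt; split_ifs <;> omega

lemma swapEnt_lt {i a b : ℕ} (h : a < b) (hne : ¬(a = i ∧ b = i + 1)) :
    swapEnt i a < swapEnt i b := by
  unfold swapEnt; split_ifs <;> omega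

lemma lt_of_swapEnt_lt {i a b : ℕ} (h : swapEnt i a < swapEnt i b) :
    a < b ∨ (a = i + 1 ∧ b = i) := by
  unfold swapEnt at h; split_ifs at h <;> omega

lemma swapEnt_self (i : ℕ) : swapEnt i i = i + 1 := by simp [swapEnt]

lemma swapEnt_succ (i : ℕ) : swapEnt i (i + 1) = i := by simp [swapEnt]

lemma swapEnt_zero {i : ℕ} (hi : 1 ≤ i) : swapEnt i 0 = 0 := by
  unfold swapEnt
  rw [if_neg (by omega), if_neg (by omega)]

/-! ### qpow lemmas -/

lemma qpow_one {q : ℝ} (hq : 0 < q) : qpow q 1 = (q : ℂ) ^ 2 := by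
  unfold qpow
  rw [one_mul, ← Complex.ofReal_exp, Real.exp_log (pow_pos hq 2)]
  push_cast
  ring

lemma qpow_inj {q : ℝ} (hq : 1 < q) {a b : ℂ} (h : qpow q a = qpow q b)
    (him : |a.im - b.im| < 2 * Real.pi / Real.log (q ^ 2)) : a = b := by
  have hL : (0 : ℝ) < Real.log (q ^ 2) := Real.log_pos (by nlinarith)
  unfold qpow at h
  rw [Complex.exp_eq_exp_iff_exists_int] at h
  obtain ⟨k, hk⟩ := h
  have him2 : a.im * Real.log (q ^ 2) =
      b.im * Real.log (q ^ 2) + (k : ℝ) * (2 * Real.pi) := by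
    have := congrArg Complex.im hk
    simpa [Complex.add_im, Complex.mul_im, Complex.mul_re, Complex.I_im, Complex.I_re,
      Complex.ofReal_im, Complex.ofReal_re] using this
  have hk0 : k = 0 := by
    by_contra hk0
    have h1 : (1 : ℝ) ≤ |(k : ℝ)| := by
      have := Int.one_le_abs hk0
      calc (1:ℝ) ≤ |k| := by exact_mod_cast this
        _ = |(k : ℝ)| := by push_cast; ring
    have hpi : (0 : ℝ) < 2 * Real.pi := by positivity
    have habs : |a.im - b.im| = |(k : ℝ)| * (2 * Real.pi) / Real.log (q ^ 2) := by
      have : a.im - b.im = (k : ℝ) * (2 * Real.pi) / Real.log (q ^ 2) := by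
        rw [eq_div_iff hL.ne']
        linarith
      rw [this, abs_div, abs_mul, abs_of_pos hpi, abs_of_pos hL]
    rw [habs, div_lt_div_iff₀ hL hL] at him
    nlinarith [mul_le_mul_of_nonneg_right h1 (mul_pos hpi hL).le]
  rw [hk0] at hk
  push_cast at hk
  simp only [zero_mul, add_zero] at hk
  have hLne : ((Real.log (q ^ 2) : ℝ) : ℂ) ≠ 0 := by exact_mod_cast hL.ne'
  exact mul_right_cancel₀ hLne hk

lemma one_lt_q_of_cell {q : ℝ} (hq0 : 0 < q) (hq1 : q ≠ 1) {P : PlacedSkewShape q}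
    {b : ℕ × ℕ} (hb : b ∈ P.S.cells) : 1 < q := by
  rcases lt_trichotomy q 1 with h | h | h
  · exfalso
    have hlog : Real.log (q ^ 2) < 0 := Real.log_neg (pow_pos hq0 2) (by nlinarith)
    have hneg : 2 * Real.pi / Real.log (q ^ 2) < 0 :=
      div_neg_of_pos_of_neg (by positivity) hlog
    linarith [(P.im_range b hb).1, (P.im_range b hb).2]
  · exact absurd h hq1
  · exact h

lemma im_bound {q : ℝ} {P : PlacedSkewShape q} {b b' : ℕ × ℕ}
    (hb : b ∈ P.S.cells) (hb' : b' ∈ P.S.cells) :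
    |(P.c b).im - (P.c b').im| < 2 * Real.pi / Real.log (q ^ 2) := by
  have h1 := P.im_range b hb
  have h2 := P.im_range b' hb'
  rw [abs_sub_lt_iff]
  constructor <;> linarith

lemma content_eq_of_qpow {q : ℝ} (hq : 1 < q) {P : PlacedSkewShape q} {b b' : ℕ × ℕ}
    (hb : b ∈ P.S.cells) (hb' : b' ∈ P.S.cells)
    (h : qpow q (P.c b) = qpow q (P.c b')) : P.c b = P.c b' :=
  qpow_inj hq h (im_bound hb hb')

lemma content_succ_of_qpow {q : ℝ} (hq : 1 < q) {P : PlacedSkewShape q} {b b' : ℕ × ℕ}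
    (hb : b ∈ P.S.cells) (hb' : b' ∈ P.S.cells)
    (h : qpow q (P.c b - P.c b') = (q : ℂ) ^ 2) : P.c b = P.c b' + 1 := by
  rw [← qpow_one (by linarith)] at h
  have him : |(P.c b - P.c b').im - (1 : ℂ).im| < 2 * Real.pi / Real.log (q ^ 2) := by
    simpa [Complex.sub_im] using im_bound hb hb'
  have := qpow_inj hq h him
  have : P.c b - P.c b' = 1 := this
  linear_combination this

/-! ### Rigidity lemmas -/

lemma entry_eq_of_box {S : SkewShape} {n : ℕ} (L L' : StdTab S 0 n) {b : ℕ × ℕ}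
    (hb : b ∈ S.cells) (hbb : L.box (L'.entry b) = L'.box (L'.entry b)) :
    L.entry b = L'.entry b := by
  have h1 := L'.entry_mem hb
  have h2 : L'.box (L'.entry b) = b := L'.box_entry hb
  rw [h2] at hbb
  have h3 := L.entry_box h1.1 h1.2
  rw [hbb] at h3
  exact h3

lemma eq_of_box_eq {S : SkewShape} {n : ℕ} {L L' : StdTab S 0 n}
    (hbox : ∀ i, 1 ≤ i → i ≤ n → L.box i = L'.box i) : L = L' := by
  apply StdTab.ext'
  funext b
  by_cases hb : b ∈ S.cells
  · have h1 := L.entry_mem hb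
    exact (entry_eq_of_box L' L hb (hbox _ (by omega) (by omega)).symm).symm
  · rw [L.zero_off b hb, L'.zero_off b hb]

lemma rigid_of_order {S : SkewShape} {n : ℕ} {L L' : StdTab S 0 n}
    (h : ∀ b ∈ S.cells, ∀ b' ∈ S.cells, L.entry b < L.entry b' → L'.entry b < L'.entry b') :
    L = L' := by
  apply eq_of_box_eq
  intro i
  induction i using Nat.strong_induction_on with
  | _ i ih =>
    intro hi1 hi2
    by_contra hne
    have hbc : L.box i ∈ S.cells := L.box_mem (by omega) (by omega)
    have hb'c : L'.box i ∈ S.cells := L'.box_mem (by omega) (by omega)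
    have hLb : L.entry (L.box i) = i := L.entry_box (by omega) (by omega)
    have hL'b' : L'.entry (L'.box i) = i := L'.entry_box (by omega) (by omega)
    have h1 : L'.entry (L.box i) ≠ i := by
      intro h0
      have := L'.box_entry hbc
      rw [h0] at this
      exact hne this.symm
    have hjm := L'.entry_mem hbc
    rcases lt_or_gt_of_ne h1 with hlt | hgt
    · have heq := entry_eq_of_box L L' hbc (ih _ hlt (by omega) (by omega))
      omega
    · have h2 : L.entry (L'.box i) < L.entry (L.box i) := by
        rcases lt_trichotomy (L.entry (L'.box i)) (L.entry (L.box i)) with h3 | h3 | h3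
        · exact h3
        · exfalso
          exact hne (L.bijOn.injOn (by simpa using hbc) (by simpa using hb'c) h3.symm)
        · exfalso
          have := h _ hbc _ hb'c h3
          omega
      rw [hLb] at h2
      have hjm' := L.entry_mem hb'c
      have heq := entry_eq_of_box L' L hb'c (ih _ h2 (by omega) (by omega)).symm
      omega

lemma rigid_of_diag {S : SkewShape} {n : ℕ} {L L' : StdTab S 0 n}
    (h : ∀ i, 1 ≤ i → i ≤ n → boxDiag (L.box i) = boxDiag (L'.box i)) : L = L' := by
  apply eq_of_box_eq
  intro i
  induction i using Nat.strong_induction_on with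
  | _ i ih =>
    intro hi1 hi2
    by_contra hne
    have hbc : L.box i ∈ S.cells := L.box_mem (by omega) (by omega)
    have hb'c : L'.box i ∈ S.cells := L'.box_mem (by omega) (by omega)
    have hLb : L.entry (L.box i) = i := L.entry_box (by omega) (by omega)
    have hL'b' : L'.entry (L'.box i) = i := L'.entry_box (by omega) (by omega)
    have hd := h i hi1 hi2
    unfold boxDiag at hd
    have hrne : (L.box i).1 ≠ (L'.box i).1 := by
      intro hr
      apply hne
      have : (L.box i).2 = (L'.box i).2 := by omega
      exact Prod.ext hr this
    rcases Nat.lt_or_ge (L.box i).1 (L'.box i).1 with hr | hr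
    · -- L'.entry (L.box i) < i
      have hlt : L'.entry (L.box i) < L'.entry (L'.box i) :=
        L'.entry_lt hbc hb'c (by omega) (by omega) hne
      rw [hL'b'] at hlt
      have hjm := L'.entry_mem hbc
      have heq := entry_eq_of_box L L' hbc (ih _ hlt (by omega) (by omega))
      omega
    · have hr' : (L'.box i).1 < (L.box i).1 := by omega
      have hlt : L.entry (L'.box i) < L.entry (L.box i) :=
        L.entry_lt hb'c hbc (by omega) (by omega) (Ne.symm hne)
      rw [hLb] at hlt
      have hjm := L.entry_mem hb'c
      have heq := entry_eq_of_box L' L hb'c (ih _ hlt (by omega) (by omega)).symm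
      omega

lemma prod_ne_of_fst {p p' : ℕ × ℕ} (h : p.1 ≠ p'.1) : p ≠ p' := fun he => h (by rw [he])

lemma prod_ne_of_snd {p p' : ℕ × ℕ} (h : p.2 ≠ p'.2) : p ≠ p' := fun he => h (by rw [he])

/-- If the box of `i` sits on the diagonal just NE of the box of `i+1`, then the box of
`i+1` is directly below the box of `i`. -/
lemma adj_case {S : SkewShape} {off n : ℕ} (L : StdTab S off n) {i : ℕ}
    (h1 : off + 1 ≤ i) (h2 : i + 1 ≤ off + n)
    (hd : boxDiag (L.box i) = boxDiag (L.box (i + 1)) + 1) :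
    L.box (i + 1) = ((L.box i).1 + 1, (L.box i).2) := by
  have hbc : L.box i ∈ S.cells := L.box_mem h1 (by omega)
  have hb'c : L.box (i + 1) ∈ S.cells := L.box_mem (by omega) h2
  have hei : L.entry (L.box i) = i := L.entry_box h1 (by omega)
  have hei' : L.entry (L.box (i + 1)) = i + 1 := L.entry_box (by omega) h2
  unfold boxDiag at hd
  rcases Nat.lt_or_ge (L.box (i + 1)).1 ((L.box i).1 + 1) with hr | hr
  · -- row of box(i+1) ≤ row of box i : contradiction
    exfalso
    have hcc : (L.box (i + 1)).2 < (L.box i).2 := by omega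
    have hmid : ((L.box (i + 1)).1, (L.box i).2) ∈ S.cells :=
      cell_sandwich hb'c hbc le_rfl (show (L.box (i + 1)).2 ≤ (L.box i).2 by omega)
        (show (L.box (i + 1)).1 ≤ (L.box i).1 by omega) le_rfl
    have e1 : L.entry (L.box (i + 1)) < L.entry ((L.box (i + 1)).1, (L.box i).2) :=
      L.entry_lt hb'c hmid le_rfl (show (L.box (i + 1)).2 ≤ (L.box i).2 by omega)
        (prod_ne_of_snd (show (L.box (i + 1)).2 ≠ (L.box i).2 by omega))
    have e2 : L.entry ((L.box (i + 1)).1, (L.box i).2) ≤ i := by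
      rcases Nat.lt_or_ge (L.box (i + 1)).1 (L.box i).1 with hlt | hge
      · have := L.entry_lt hmid hbc (show (L.box (i + 1)).1 ≤ (L.box i).1 by omega)
          (show (L.box i).2 ≤ (L.box i).2 from le_rfl)
          (prod_ne_of_fst (show (L.box (i + 1)).1 ≠ (L.box i).1 by omega))
        omega
      · have heq : ((L.box (i + 1)).1, (L.box i).2) = L.box i := by
          have : (L.box (i + 1)).1 = (L.box i).1 := by omega
          rw [this]
        rw [heq, hei]
    omega
  · rcases Nat.lt_or_ge ((L.box i).1 + 1) (L.box (i + 1)).1 with hr2 | hr2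
    · -- row of box(i+1) ≥ row of box i + 2 : contradiction
      exfalso
      have hcc : (L.box i).2 < (L.box (i + 1)).2 := by omega
      have hmid : ((L.box i).1, (L.box (i + 1)).2) ∈ S.cells :=
        cell_sandwich hbc hb'c le_rfl (show (L.box i).2 ≤ (L.box (i + 1)).2 by omega)
          (show (L.box i).1 ≤ (L.box (i + 1)).1 by omega) le_rfl
      have e1 : L.entry (L.box i) < L.entry ((L.box i).1, (L.box (i + 1)).2) :=
        L.entry_lt hbc hmid le_rfl (show (L.box i).2 ≤ (L.box (i + 1)).2 by omega)
        (prod_ne_of_snd (show (L.box i).2 ≠ (L.box (i + 1)).2 by omega))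
      have e2 : L.entry ((L.box i).1, (L.box (i + 1)).2) < L.entry (L.box (i + 1)) :=
        L.entry_lt hmid hb'c (show (L.box i).1 ≤ (L.box (i + 1)).1 by omega) le_rfl
        (prod_ne_of_fst (show (L.box i).1 ≠ (L.box (i + 1)).1 by omega))
      omega
    · have hre : (L.box (i + 1)).1 = (L.box i).1 + 1 := by omega
      have hce : (L.box (i + 1)).2 = (L.box i).2 := by omega
      exact Prod.ext hre hce

/-! ### The swapped tableau -/

lemma swap_exists {S : SkewShape} {n : ℕ} (L : StdTab S 0 n) {i : ℕ}
    (hi : 1 ≤ i) (hin : i + 1 ≤ n)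
    (hr : (L.box i).1 ≠ (L.box (i + 1)).1) (hc : (L.box i).2 ≠ (L.box (i + 1)).2) :
    ∃ L' : StdTab S 0 n, IsSwapTab i L L' := by
  have hswap : Set.BijOn (swapEnt i) (Set.Icc (0 + 1) (0 + n)) (Set.Icc (0 + 1) (0 + n)) := by
    have hmaps : Set.MapsTo (swapEnt i) (Set.Icc (0 + 1) (0 + n)) (Set.Icc (0 + 1) (0 + n)) := by
      intro k hk
      simp only [Set.mem_Icc] at hk ⊢
      unfold swapEnt
      split_ifs <;> omega
    refine ⟨hmaps, ?_, ?_⟩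
    · intro a _ b _ hab
      have := congrArg (swapEnt i) hab
      rwa [swapEnt_invol, swapEnt_invol] at this
    · intro k hk
      exact ⟨swapEnt i k, hmaps hk, swapEnt_invol i k⟩
  refine ⟨⟨fun b => swapEnt i (L.entry b), ?_, ?_, ?_, ?_⟩, fun b => rfl⟩
  · intro b hb
    show swapEnt i (L.entry b) = 0
    rw [L.zero_off b hb]
    exact swapEnt_zero hi
  · exact hswap.comp L.bijOn
  · intro r c hcell hcell'
    apply swapEnt_lt (L.row_inc r c hcell hcell')
    rintro ⟨he1, he2⟩
    apply hr
    have b1 : L.box i = (r, c) := by rw [← he1]; exact L.box_entry hcell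
    have b2 : L.box (i + 1) = (r, c + 1) := by rw [← he2]; exact L.box_entry hcell'
    rw [b1, b2]
  · intro r c hcell hcell'
    apply swapEnt_lt (L.col_inc r c hcell hcell')
    rintro ⟨he1, he2⟩
    apply hc
    have b1 : L.box i = (r, c) := by rw [← he1]; exact L.box_entry hcell
    have b2 : L.box (i + 1) = (r + 1, c) := by rw [← he2]; exact L.box_entry hcell'
    rw [b1, b2]

lemma isSwapTab_symm {S : SkewShape} {off n : ℕ} {i : ℕ} {L L' : StdTab S off n}
    (h : IsSwapTab i L L') : IsSwapTab i L' L := by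
  intro b
  rw [h b, swapEnt_invol]

lemma vswap_eq {S : SkewShape} {off n : ℕ} {i : ℕ} {L L' : StdTab S off n}
    (h : IsSwapTab i L L') : vswap i L = Finsupp.single L' 1 := by
  have hex : ∃ L'', IsSwapTab i L L'' := ⟨L', h⟩
  rw [vswap, dif_pos hex]
  congr 1
  exact StdTab.ext' (funext fun b => (hex.choose_spec b).trans (h b).symm)

/-! ### Existence of a standard tableau (column reading) -/

lemma exists_stdTab (S : SkewShape) {n : ℕ} (h : S.cells.card = n) :
    Nonempty (StdTab S 0 n) := by
  classical
  set key : ℕ × ℕ → ℕ ×ₗ ℕ := fun b => toLex (b.2, b.1) with hkey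
  have hkeyinj : Function.Injective key := by
    intro a b hab
    have h2 := congrArg (fun p => (ofLex p).2) hab
    have h1 := congrArg (fun p => (ofLex p).1) hab
    simp [hkey] at h1 h2
    exact Prod.ext h2 h1
  have hkeylt : ∀ a b : ℕ × ℕ, key a < key b ↔ (a.2 < b.2 ∨ (a.2 = b.2 ∧ a.1 < b.1)) := by
    intro a b
    exact Prod.Lex.lt_iff
  set t : Finset (ℕ ×ₗ ℕ) := S.cells.image key with ht
  have htc : t.card = n := by rw [ht, Finset.card_image_of_injective _ hkeyinj, h]
  set e := t.orderIsoOfFin htc with he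
  have hmem : ∀ b ∈ S.cells, key b ∈ t := fun b hb => Finset.mem_image_of_mem key hb
  set f : ℕ × ℕ → ℕ := fun b =>
    if hb : b ∈ S.cells then (e.symm ⟨key b, hmem b hb⟩ : Fin n).val + 1 else 0 with hf
  have hfval : ∀ b (hb : b ∈ S.cells), f b = (e.symm ⟨key b, hmem b hb⟩ : Fin n).val + 1 := by
    intro b hb
    simp [hf, dif_pos hb]
  have hmono : ∀ b ∈ S.cells, ∀ b' ∈ S.cells, key b < key b' → f b < f b' := by
    intro b hb b' hb' hlt
    rw [hfval b hb, hfval b' hb']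
    have : e.symm ⟨key b, hmem b hb⟩ < e.symm ⟨key b', hmem b' hb'⟩ := by
      rw [e.symm.lt_iff_lt]
      exact Subtype.mk_lt_mk.mpr hlt
    omega
  refine ⟨⟨f, ?_, ⟨?_, ?_, ?_⟩, ?_, ?_⟩⟩
  · intro b hb
    simp [hf, dif_neg hb]
  · -- MapsTo
    intro b hb
    simp only [Finset.coe_sort_coe, Finset.mem_coe] at hb
    rw [Set.mem_Icc, hfval b (by simpa using hb)]
    have := (e.symm ⟨key b, hmem b (by simpa using hb)⟩).isLt
    omega
  · -- InjOn
    intro b hb b' hb' hff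
    simp only [Finset.mem_coe] at hb hb'
    rw [hfval b (by simpa using hb), hfval b' (by simpa using hb')] at hff
    have : e.symm ⟨key b, hmem b (by simpa using hb)⟩
        = e.symm ⟨key b', hmem b' (by simpa using hb')⟩ := Fin.ext (by omega)
    have := e.symm.injective this
    exact hkeyinj (Subtype.mk_eq_mk.mp this)
  · -- SurjOn
    intro k hk
    rw [Set.mem_Icc] at hk
    have hk1 : k - 1 < n := by omega
    set j : Fin n := ⟨k - 1, hk1⟩ with hj
    have hejt : (e j : ℕ ×ₗ ℕ) ∈ t := (e j).2
    obtain ⟨b, hb, hbeq⟩ := Finset.mem_image.mp hejt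
    refine ⟨b, by simpa using hb, ?_⟩
    rw [hfval b hb]
    have : (⟨key b, hmem b hb⟩ : {x // x ∈ t}) = e j := Subtype.ext hbeq
    rw [this, e.symm_apply_apply]
    simp [hj]
    omega
  · -- row_inc
    intro r c h1 h2
    apply hmono _ h1 _ h2
    rw [hkeylt]
    left; exact Nat.lt_succ_self c
  · -- col_inc
    intro r c h1 h2
    apply hmono _ h1 _ h2
    rw [hkeylt]
    right; exact ⟨rfl, Nat.lt_succ_self r⟩

/-! ### The disagreement set -/

def disag {S : SkewShape} {n : ℕ} (L L' : StdTab S 0 n) : Finset ((ℕ × ℕ) × (ℕ × ℕ)) :=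
  (S.cells ×ˢ S.cells).filter fun p =>
    L.entry p.1 < L.entry p.2 ∧ L'.entry p.2 < L'.entry p.1

lemma mem_disag {S : SkewShape} {n : ℕ} {L L' : StdTab S 0 n} {p : (ℕ × ℕ) × (ℕ × ℕ)} :
    p ∈ disag L L' ↔ (p.1 ∈ S.cells ∧ p.2 ∈ S.cells) ∧
      L.entry p.1 < L.entry p.2 ∧ L'.entry p.2 < L'.entry p.1 := by
  rw [disag, Finset.mem_filter, Finset.mem_product]

lemma eq_of_disag_empty {S : SkewShape} {n : ℕ} {L L' : StdTab S 0 n}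
    (h : disag L L' = ∅) : L = L' := by
  apply rigid_of_order
  intro b hb b' hb' hlt
  rcases lt_trichotomy (L'.entry b) (L'.entry b') with h1 | h1 | h1
  · exact h1
  · exfalso
    have := L'.bijOn.injOn (by simpa using hb) (by simpa using hb') h1
    subst this
    omega
  · exfalso
    have hmem : (b, b') ∈ disag L L' := mem_disag.mpr ⟨⟨hb, hb'⟩, hlt, h1⟩
    rw [h] at hmem
    simp at hmem

lemma disag_step {S : SkewShape} {n : ℕ} {L L' : StdTab S 0 n}
    (h : (disag L L').Nonempty) :
    ∃ (i : ℕ) (L'' : StdTab S 0 n), 1 ≤ i ∧ i + 1 ≤ n ∧ IsSwapTab i L'' L' ∧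
      (disag L L'').card < (disag L L').card := by
  obtain ⟨p, hp, hmin⟩ :=
    Finset.exists_min_image (disag L L') (fun p => L'.entry p.1 - L'.entry p.2) h
  obtain ⟨⟨hc1, hc2⟩, he1, he2⟩ := mem_disag.mp hp
  have hjm := L'.entry_mem hc1
  have hj'm := L'.entry_mem hc2
  have hstep : L'.entry p.1 = L'.entry p.2 + 1 := by
    by_contra hne
    have hb''c : L'.box (L'.entry p.2 + 1) ∈ S.cells := L'.box_mem (by omega) (by omega)
    have he'' : L'.entry (L'.box (L'.entry p.2 + 1)) = L'.entry p.2 + 1 :=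
      L'.entry_box (by omega) (by omega)
    rcases lt_trichotomy (L.entry p.1) (L.entry (L'.box (L'.entry p.2 + 1))) with h3 | h3 | h3
    · have hmem : (p.1, L'.box (L'.entry p.2 + 1)) ∈ disag L L' :=
        mem_disag.mpr ⟨⟨hc1, hb''c⟩, h3,
          show L'.entry (L'.box (L'.entry p.2 + 1)) < L'.entry p.1 by rw [he'']; omega⟩
      have hmin2 : L'.entry p.1 - L'.entry p.2
          ≤ L'.entry p.1 - L'.entry (L'.box (L'.entry p.2 + 1)) := hmin _ hmem
      rw [he''] at hmin2
      omega
    · have hbne : p.1 = L'.box (L'.entry p.2 + 1) :=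
        L.bijOn.injOn (by simpa using hc1) (by simpa using hb''c) h3
      rw [← hbne] at he''
      omega
    · have hmem : (L'.box (L'.entry p.2 + 1), p.2) ∈ disag L L' :=
        mem_disag.mpr ⟨⟨hb''c, hc2⟩, lt_trans h3 he1,
          show L'.entry p.2 < L'.entry (L'.box (L'.entry p.2 + 1)) by rw [he'']; omega⟩
      have hmin2 : L'.entry p.1 - L'.entry p.2
          ≤ L'.entry (L'.box (L'.entry p.2 + 1)) - L'.entry p.2 := hmin _ hmem
      rw [he''] at hmin2
      omega
  set i := L'.entry p.2 with hidef
  have hb'box : L'.box i = p.2 := L'.box_entry hc2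
  have hbbox : L'.box (i + 1) = p.1 := by rw [← hstep]; exact L'.box_entry hc1
  have hbne : p.1 ≠ p.2 := by
    intro hpe
    rw [hpe] at he1
    omega
  have hrne : (L'.box i).1 ≠ (L'.box (i + 1)).1 := by
    rw [hb'box, hbbox]
    intro hre
    rcases lt_trichotomy p.1.2 p.2.2 with h4 | h4 | h4
    · have := L'.entry_lt hc1 hc2 (le_of_eq hre.symm) (le_of_lt h4)
        (prod_ne_of_snd (by omega))
      omega
    · exact hbne (Prod.ext hre.symm h4)
    · have := L.entry_lt hc2 hc1 (le_of_eq hre) (le_of_lt h4)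
        (prod_ne_of_snd (by omega))
      omega
  have hcne : (L'.box i).2 ≠ (L'.box (i + 1)).2 := by
    rw [hb'box, hbbox]
    intro hce
    rcases lt_trichotomy p.1.1 p.2.1 with h4 | h4 | h4
    · have := L'.entry_lt hc1 hc2 (le_of_lt h4) (le_of_eq hce.symm)
        (prod_ne_of_fst (by omega))
      omega
    · exact hbne (Prod.ext h4 hce.symm)
    · have := L.entry_lt hc2 hc1 (le_of_lt h4) (le_of_eq hce)
        (prod_ne_of_fst (by omega))
      omega
  obtain ⟨L'', hsw⟩ :=
    swap_exists L' (show 1 ≤ i by omega) (show i + 1 ≤ n by omega) (Ne.symm hrne).symm hcne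
  refine ⟨i, L'', by omega, by omega, isSwapTab_symm hsw, ?_⟩
  apply Finset.card_lt_card
  have hsub : disag L L'' ⊆ disag L L' := by
    intro a ha
    obtain ⟨⟨ha1, ha2⟩, hae1, hae2⟩ := mem_disag.mp ha
    have hswv1 : L''.entry a.1 = swapEnt i (L'.entry a.1) := hsw a.1
    have hswv2 : L''.entry a.2 = swapEnt i (L'.entry a.2) := hsw a.2
    rw [hswv1, hswv2] at hae2
    rcases lt_of_swapEnt_lt hae2 with h5 | ⟨h5, h6⟩
    · exact mem_disag.mpr ⟨⟨ha1, ha2⟩, hae1, h5⟩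
    · exfalso
      have ha2b : a.2 = p.1 := by
        rw [← hbbox, ← h5]
        exact (L'.box_entry ha2).symm
      have ha1b : a.1 = p.2 := by
        rw [← hb'box, ← h6]
        exact (L'.box_entry ha1).symm
      rw [ha1b, ha2b] at hae1
      omega
  rw [Finset.ssubset_iff_of_subset hsub]
  refine ⟨p, hp, ?_⟩
  intro hmem
  obtain ⟨-, -, hbad⟩ := mem_disag.mp hmem
  rw [hsw p.1, hsw p.2, hstep, ← hidef, swapEnt_self, swapEnt_succ] at hbad
  omega

/-! ### Module-side lemmas -/

section Mod

variable {q : ℝ} {n : ℕ} {P : PlacedSkewShape q} {A : AHMod n (q : ℂ) (StdTab P.S 0 n →₀ ℂ)}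

lemma x_coeff (hA : IsHTilde n P A) {i : ℕ} (hi : 1 ≤ i) (hin : i ≤ n)
    (m : StdTab P.S 0 n →₀ ℂ) (L' : StdTab P.S 0 n) :
    (A.x i m) L' = qpow q (P.c (L'.box i)) * m L' := by
  induction m using Finsupp.induction_linear with
  | zero => simp
  | add f g hf hg =>
    rw [map_add, Finsupp.add_apply, hf, hg, Finsupp.add_apply]
    ring
  | single a b =>
    have hsgl : (Finsupp.single a b : StdTab P.S 0 n →₀ ℂ) = b • Finsupp.single a 1 := by
      rw [Finsupp.smul_single, smul_eq_mul, mul_one]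
    rw [hsgl, map_smul, hA.1 i hi hin a, smul_smul]
    by_cases hL : a = L'
    · subst hL
      simp [Finsupp.single_apply]
      ring
    · simp [Finsupp.single_apply, hL]

lemma wt_sep (hq0 : 0 < q) (hq1 : q ≠ 1)
    {L L' : StdTab P.S 0 n} (hne : L ≠ L') :
    ∃ i, 1 ≤ i ∧ i ≤ n ∧ qpow q (P.c (L.box i)) ≠ qpow q (P.c (L'.box i)) := by
  by_contra hcon
  push_neg at hcon
  apply hne
  apply rigid_of_diag
  intro i hi1 hi2
  have hbc : L.box i ∈ P.S.cells := L.box_mem (by omega) (by omega)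
  have hb'c : L'.box i ∈ P.S.cells := L'.box_mem (by omega) (by omega)
  have hq : 1 < q := one_lt_q_of_cell hq0 hq1 hbc
  have hceq : P.c (L.box i) = P.c (L'.box i) :=
    content_eq_of_qpow hq hbc hb'c (hcon i hi1 hi2)
  exact (P.same_diag _ hbc _ hb'c).mp hceq

lemma extract (hq0 : 0 < q) (hq1 : q ≠ 1) (hA : IsHTilde n P A)
    {N : Submodule ℂ (StdTab P.S 0 n →₀ ℂ)} (hN : A.InvariantSub N) :
    ∀ (k : ℕ) (m : StdTab P.S 0 n →₀ ℂ), m ∈ N → m.support.card ≤ k →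
      ∀ L ∈ m.support, Finsupp.single L 1 ∈ N := by
  intro k
  induction k with
  | zero =>
    intro m _ hc L hL
    rw [Nat.le_zero, Finset.card_eq_zero] at hc
    rw [hc] at hL
    simp at hL
  | succ k ih =>
    intro m hm hc L hL
    have hmL : m L ≠ 0 := Finsupp.mem_support_iff.mp hL
    by_cases hsub : ∀ L₂ ∈ m.support, L₂ = L
    · have hms : m = Finsupp.single L (m L) := by
        ext L'
        rcases eq_or_ne L L' with h | h
        · subst h; simp
        · rw [Finsupp.single_apply, if_neg h]
          by_contra h0
          exact h (hsub L' (Finsupp.mem_support_iff.mpr h0)).symm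
      obtain ⟨cc, hcc, hms'⟩ : ∃ c : ℂ, c ≠ 0 ∧ m = Finsupp.single L c := ⟨m L, hmL, hms⟩
      have hval : Finsupp.single L (1 : ℂ) = cc⁻¹ • m := by
        rw [hms', Finsupp.smul_single, smul_eq_mul, inv_mul_cancel₀ hcc]
      rw [hval]
      exact N.smul_mem _ hm
    · push_neg at hsub
      obtain ⟨L₂, hL₂, hL₂ne⟩ := hsub
      obtain ⟨i, hi1, hi2, hwne⟩ := wt_sep hq0 hq1 hL₂ne
      set m' := A.x i m - qpow q (P.c (L₂.box i)) • m with hm'def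
      have hm' : m' ∈ N := N.sub_mem (hN.2 i hi1 hi2 m hm) (N.smul_mem _ hm)
      have hco : ∀ L', m' L' =
          (qpow q (P.c (L'.box i)) - qpow q (P.c (L₂.box i))) * m L' := by
        intro L'
        rw [hm'def, Finsupp.sub_apply, Finsupp.smul_apply, x_coeff hA hi1 hi2, smul_eq_mul]
        ring
      have hsupp : m'.support ⊆ m.support.erase L₂ := by
        intro L' hL'
        rw [Finset.mem_erase]
        have h0 := Finsupp.mem_support_iff.mp hL'
        rw [hco] at h0
        constructor
        · rintro rfl
          exact h0 (by rw [sub_self, zero_mul])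
        · exact Finsupp.mem_support_iff.mpr fun hz => h0 (by rw [hz, mul_zero])
      have hLm : L ∈ m'.support := by
        apply Finsupp.mem_support_iff.mpr
        rw [hco]
        exact mul_ne_zero (sub_ne_zero.mpr (Ne.symm hwne)) hmL
      have hcard : m'.support.card ≤ k := by
        have h1 := Finset.card_le_card hsupp
        rw [Finset.card_erase_of_mem hL₂] at h1
        omega
      exact ih m' hm' hcard L hLm

lemma move_mem (hq0 : 0 < q) (hq1 : q ≠ 1) (hA : IsHTilde n P A)
    {N : Submodule ℂ (StdTab P.S 0 n →₀ ℂ)} (hN : A.InvariantSub N)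
    {i : ℕ} (hi : 1 ≤ i) (hin : i + 1 ≤ n) {L L' : StdTab P.S 0 n}
    (hsw : IsSwapTab i L L') (hL : Finsupp.single L 1 ∈ N) :
    Finsupp.single L' 1 ∈ N := by
  have hbc : L.box i ∈ P.S.cells := L.box_mem (by omega) (by omega)
  have hb'c : L.box (i + 1) ∈ P.S.cells := L.box_mem (by omega) (by omega)
  have hq : 1 < q := one_lt_q_of_cell hq0 hq1 hbc
  have hqc0 : (q : ℂ) ≠ 0 := Complex.ofReal_ne_zero.mpr (by linarith)
  set β := (q : ℂ)⁻¹ + TLL P 0 n i L with hβ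
  have hβ0 : β ≠ 0 := by
    intro h0
    rw [hβ, TLL] at h0
    set Z := qpow q (P.c (L.box i) - P.c (L.box (i + 1))) with hZ
    have h1Z : (1 : ℂ) - Z ≠ 0 := by
      intro hz
      rw [hz, div_zero, add_zero] at h0
      exact inv_ne_zero hqc0 h0
    have hb : ((q : ℂ) - (q : ℂ)⁻¹) / (1 - Z) = -(q : ℂ)⁻¹ := by
      linear_combination h0
    rw [div_eq_iff h1Z] at hb
    have hqq : (q : ℂ) * (q : ℂ)⁻¹ = 1 := mul_inv_cancel₀ hqc0
    have hZq : Z = (q : ℂ) ^ 2 := by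
      linear_combination (-(q : ℂ)) * hb - Z * hqq
    have hcsucc : P.c (L.box i) = P.c (L.box (i + 1)) + 1 :=
      content_succ_of_qpow hq hbc hb'c hZq
    have hd : boxDiag (L.box i) = boxDiag (L.box (i + 1)) + 1 :=
      (P.adj_diag _ hb'c _ hbc).mp hcsucc
    have hadj : L.box (i + 1) = ((L.box i).1 + 1, (L.box i).2) :=
      adj_case L (by omega) (by omega) hd
    have hcell2 : ((L.box i).1 + 1, (L.box i).2) ∈ P.S.cells := by rw [← hadj]; exact hb'c
    have hcol := L'.col_inc (L.box i).1 (L.box i).2 hbc hcell2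
    have he1 : L'.entry (L.box i) = i + 1 := by
      rw [hsw (L.box i), L.entry_box (by omega) (by omega), swapEnt_self]
    have he2 : L'.entry ((L.box i).1 + 1, (L.box i).2) = i := by
      rw [← hadj, hsw (L.box (i + 1)), L.entry_box (by omega) (by omega), swapEnt_succ]
    rw [he2] at hcol
    have : L'.entry ((L.box i).1, (L.box i).2) = i + 1 := he1
    omega
  have hT := hA.2 i hi (by omega) L
  rw [vswap_eq hsw] at hT
  have hTN : A.T i (Finsupp.single L 1) ∈ N := hN.1 i hi (by omega) _ hL
  have h2 : β • Finsupp.single L' (1 : ℂ) ∈ N := by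
    have heq : β • Finsupp.single L' (1 : ℂ)
        = A.T i (Finsupp.single L 1) - TLL P 0 n i L • Finsupp.single L 1 := by
      rw [hT, add_sub_cancel_left]
    rw [heq]
    exact N.sub_mem hTN (N.smul_mem _ hL)
  have h3 := N.smul_mem β⁻¹ h2
  rwa [smul_smul, inv_mul_cancel₀ hβ0, one_smul] at h3

lemma chain_mem (hq0 : 0 < q) (hq1 : q ≠ 1) (hA : IsHTilde n P A)
    {N : Submodule ℂ (StdTab P.S 0 n →₀ ℂ)} (hN : A.InvariantSub N) :
    ∀ (k : ℕ) (L L' : StdTab P.S 0 n), (disag L L').card ≤ k →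
      Finsupp.single L 1 ∈ N → Finsupp.single L' 1 ∈ N := by
  intro k
  induction k with
  | zero =>
    intro L L' hc hL
    have he : disag L L' = ∅ := Finset.card_eq_zero.mp (by omega)
    rw [← eq_of_disag_empty he]
    exact hL
  | succ k ih =>
    intro L L' hc hL
    rcases Finset.eq_empty_or_nonempty (disag L L') with he | hne
    · rw [← eq_of_disag_empty he]
      exact hL
    · obtain ⟨i, L'', hi1, hi2, hsw, hlt⟩ := disag_step hne
      exact move_mem hq0 hq1 hA hN hi1 hi2 hsw (ih L L'' (by omega) hL)

end Mod

end Aux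

/-- The `H̃_n`-module `H̃^{(c,λ/μ)}` is irreducible and calibrated, and its
dimension is the number of standard tableaux of shape `λ/μ`. -/
theorem HTilde_irreducible_calibrated
    (q : ℝ) (hq0 : 0 < q) (hq1 : q ≠ 1) (n : ℕ)
    (P : PlacedSkewShape q) (hn : P.S.cells.card = n)
    (A : AHMod n (q : ℂ) (StdTab P.S 0 n →₀ ℂ)) (hA : IsHTilde n P A) :
    A.IsIrreducible ∧ FiniteDimensional ℂ (StdTab P.S 0 n →₀ ℂ) ∧ A.Calibrated ∧
      Module.finrank ℂ (StdTab P.S 0 n →₀ ℂ) = Nat.card (StdTab P.S 0 n) := by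
  obtain ⟨C⟩ := exists_stdTab P.S hn
  have hfin : Finite (StdTab P.S 0 n) := by
    have hmem : ∀ (L : StdTab P.S 0 n) (b : {x // x ∈ P.S.cells}),
        L.entry b.1 ∈ Set.Icc (0 + 1) (0 + n) := fun L b => L.bijOn.mapsTo (by simpa using b.2)
    apply Finite.of_injective
      (fun (L : StdTab P.S 0 n) => fun (b : {x // x ∈ P.S.cells}) =>
        (⟨L.entry b.1, hmem L b⟩ : Set.Icc (0 + 1) (0 + n)))
    intro L L' h
    apply StdTab.ext'
    funext b
    by_cases hb : b ∈ P.S.cells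
    · exact congrArg Subtype.val (congrFun h ⟨b, hb⟩)
    · rw [L.zero_off b hb, L'.zero_off b hb]
  haveI := hfin
  haveI : Fintype (StdTab P.S 0 n) := Fintype.ofFinite _
  have hFD : FiniteDimensional ℂ (StdTab P.S 0 n →₀ ℂ) :=
    Module.Finite.equiv (Finsupp.linearEquivFunOnFinite ℂ ℂ _).symm
  refine ⟨⟨⟨Finsupp.single C 1, by simp⟩, ?_⟩, hFD, ?_, ?_⟩
  · intro N hN
    rcases eq_or_ne N ⊥ with h | h
    · left; exact h
    · right
      obtain ⟨m, hm, hm0⟩ := (Submodule.ne_bot_iff N).mp h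
      obtain ⟨L, hL⟩ := Finsupp.support_nonempty_iff.mpr hm0
      have hLN : Finsupp.single L 1 ∈ N :=
        extract hq0 hq1 hA hN m.support.card m hm le_rfl L hL
      rw [eq_top_iff]
      intro x hx
      clear hx
      induction x using Finsupp.induction with
      | zero => exact N.zero_mem
      | single_add a b f _ _ ih =>
        apply N.add_mem _ ih
        have hone : Finsupp.single a (1 : ℂ) ∈ N :=
          chain_mem hq0 hq1 hA hN (disag L a).card L a le_rfl hLN
        have hsgl : Finsupp.single a b = b • Finsupp.single a (1 : ℂ) := by
          rw [Finsupp.smul_single, smul_eq_mul, mul_one]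
        rw [hsgl]
        exact N.smul_mem _ hone
  · exact ⟨StdTab P.S 0 n, Finsupp.basisSingleOne, fun j =>
      ⟨fun i' => qpow q (P.c (j.box i')), fun i' h1 h2 => by
        simpa using hA.1 i' h1 h2 j⟩⟩
  · rw [Module.finrank_finsupp_self, Nat.card_eq_fintype_card]
end

section
/- Let M be a calibrated H̃_n-module and let t = (t_1,…,t_n) be a weight of M. Then: (1) t_{i+1} ≠ t_i for all 1 ≤ i ≤ n−1; and (2) more generally, if t_i = t_j for some i < j, then there exist indices k and ℓ with i < k < j and i < ℓ < j such that either t_k = q²t_i and t_ℓ = q^{−2}t_i, or t_k = q^{−2}t_i and t_ℓ = q²t_i. -/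
open scoped Classical

section Aux

variable {n : ℕ} {q : ℂ} {M : Type} [AddCommGroup M] [Module ℂ M]

namespace AHMod

theorem cross1 (A : AHMod n q M) (i : ℕ) (h1 : 1 ≤ i) (h2 : i + 1 ≤ n) :
    A.x (i+1) * A.T i = A.T i * A.x i + (q - q⁻¹) • A.x (i+1) := by
  have hin : i ≤ n - 1 := by omega
  have hx := A.xsucc i h1 h2
  have hqd := A.quad i h1 hin
  calc A.x (i+1) * A.T i = A.T i * A.x i * (A.T i * A.T i) := by
        rw [hx]; noncomm_ring
    _ = A.T i * A.x i * ((q - q⁻¹) • A.T i + 1) := by rw [hqd]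
    _ = A.T i * A.x i + (q - q⁻¹) • A.x (i+1) := by
        rw [hx]; noncomm_ring

theorem cross2 (A : AHMod n q M) (i : ℕ) (h1 : 1 ≤ i) (h2 : i + 1 ≤ n) :
    A.x i * A.T i = A.T i * A.x (i+1) - (q - q⁻¹) • A.x (i+1) := by
  have hin : i ≤ n - 1 := by omega
  have hx := A.xsucc i h1 h2
  have hqd := A.quad i h1 hin
  have : A.T i * A.x (i+1) = (A.T i * A.T i) * (A.x i * A.T i) := by
    rw [hx]; noncomm_ring
  rw [hqd] at this
  rw [this, hx]; noncomm_ring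

end AHMod

end Aux
section Aux2

variable {n : ℕ} {q : ℂ} {M : Type} [AddCommGroup M] [Module ℂ M]

namespace AHMod

variable {A : AHMod n q M} {ι : Type} {b : Module.Basis ι ℂ M} {s : ι → ℕ → ℂ}

theorem repr_diag (hs : ∀ j, A.wtVec (s j) (b j))
    {r : ℕ} (h1 : 1 ≤ r) (h2 : r ≤ n) (a : ℂ) (j : ι) (v : M) :
    b.repr ((A.x r - a • 1) v) j = (s j r - a) * b.repr v j := by
  have key : (Finsupp.lapply j ∘ₗ (b.repr.toLinearMap ∘ₗ (A.x r - a • (1 : Module.End ℂ M))))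
      = (s j r - a) • (Finsupp.lapply j ∘ₗ b.repr.toLinearMap) := by
    apply b.ext
    intro k
    simp only [LinearMap.comp_apply, LinearMap.smul_apply, LinearMap.sub_apply,
      Module.End.one_apply, LinearEquiv.coe_coe, Finsupp.lapply_apply]
    rw [hs k r h1 h2, ← sub_smul, map_smul, b.repr_self]
    by_cases hkj : k = j
    · subst hkj; simp
    · simp [Finsupp.single_apply, hkj]
  have := congrArg (fun f => f v) key
  simpa using this

theorem repr_diag_pow (hs : ∀ j, A.wtVec (s j) (b j))
    {r : ℕ} (h1 : 1 ≤ r) (h2 : r ≤ n) (a : ℂ) (j : ι) (v : M) (p : ℕ) :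
    b.repr (((A.x r - a • 1) ^ p) v) j = (s j r - a) ^ p * b.repr v j := by
  induction p generalizing v with
  | zero => simp
  | succ p ih =>
    rw [pow_succ', Module.End.mul_apply, repr_diag hs h1 h2, ih]
    ring

theorem sq_zero (hs : ∀ j, A.wtVec (s j) (b j))
    {r : ℕ} (h1 : 1 ≤ r) (h2 : r ≤ n) (a : ℂ) (v : M)
    (hv : ((A.x r - a • (1 : Module.End ℂ M)) ^ 2) v = 0) : (A.x r - a • 1) v = 0 := by
  have h0 : b.repr ((A.x r - a • 1) v) = 0 := by
    ext j
    have h2' := repr_diag_pow hs h1 h2 a j v 2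
    rw [hv, map_zero] at h2'
    have hz : (s j r - a) ^ 2 * b.repr v j = 0 := by
      simpa using h2'.symm
    rw [repr_diag hs h1 h2]
    rcases mul_eq_zero.mp hz with h | h
    · have h' := pow_eq_zero_iff (two_ne_zero) |>.mp h
      simp [h']
    · simp [h]
  exact (LinearEquiv.map_eq_zero_iff b.repr).mp h0

/-- From a generalized weight, calibration gives a genuine weight vector. -/
theorem wtvec_of_weight (hcal : A.Calibrated) (t : ℕ → ℂ) (hwt : A.IsWeight t) :
    ∃ m : M, m ≠ 0 ∧ A.wtVec t m := by
  obtain ⟨ι, b, hb⟩ := hcal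
  choose s hs using hb
  obtain ⟨m, hm0, hgen⟩ := hwt
  have hrepr : b.repr m ≠ 0 := by
    simpa using (LinearEquiv.map_ne_zero_iff b.repr).mpr hm0
  obtain ⟨j, hj⟩ := Finsupp.ne_iff.mp hrepr
  simp only [Finsupp.coe_zero, Pi.zero_apply] at hj
  refine ⟨b j, b.ne_zero j, ?_⟩
  intro r hr1 hr2
  obtain ⟨p, hp0, hp⟩ := hgen r hr1 hr2
  have hd := repr_diag_pow hs hr1 hr2 (t r) j m p
  rw [hp, map_zero] at hd
  have hz : (s j r - t r) ^ p * b.repr m j = 0 := by simpa using hd.symm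
  have hsj : s j r = t r := by
    rcases mul_eq_zero.mp hz with h | h
    · have h' := pow_eq_zero_iff (by omega : p ≠ 0) |>.mp h
      linear_combination h'
    · exact absurd h hj
  rw [hs j r hr1 hr2, hsj]

end AHMod

end Aux2
section Aux3

variable {n : ℕ} {q : ℂ} {M : Type} [AddCommGroup M] [Module ℂ M]

namespace AHMod

variable {A : AHMod n q M}

theorem sq_zero' (hcal : A.Calibrated) {r : ℕ} (h1 : 1 ≤ r) (h2 : r ≤ n) (a : ℂ) (v : M)
    (hv : ((A.x r - a • (1 : Module.End ℂ M)) ^ 2) v = 0) : (A.x r - a • 1) v = 0 := by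
  obtain ⟨ι, b, hb⟩ := hcal
  choose s hs using hb
  exact sq_zero hs h1 h2 a v hv

theorem part1 (hcal : A.Calibrated) (hq0 : q ≠ 0) (hq2 : q ^ 2 ≠ 1)
    {t : ℕ → ℂ} (ht : ∃ m : M, m ≠ 0 ∧ A.wtVec t m) {i : ℕ} (hti : t i ≠ 0)
    (h1 : 1 ≤ i) (h2 : i + 1 ≤ n) : t (i + 1) ≠ t i := by
  intro heq
  obtain ⟨m, hm0, hm⟩ := ht
  have hxi : A.x i m = t i • m := hm i h1 (by omega)
  have hxi1 : A.x (i+1) m = t (i+1) • m := hm (i+1) (by omega) h2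
  have hc := congrArg (fun f => f m) (A.cross2 i h1 h2)
  simp only [Module.End.mul_apply, LinearMap.sub_apply, LinearMap.smul_apply] at hc
  rw [hxi1, heq, map_smul] at hc
  -- hc : A.x i (A.T i m) = t i • A.T i m - (q - q⁻¹) • t i • m
  set D : Module.End ℂ M := A.x i - (t i) • 1 with hDdef
  have hDm : D m = 0 := by
    simp [hDdef, LinearMap.sub_apply, hxi]
  have hD1 : D (A.T i m) = -(((q - q⁻¹) * t i) • m) := by
    simp only [hDdef, LinearMap.sub_apply, LinearMap.smul_apply, Module.End.one_apply]
    rw [hc, smul_smul]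
    abel
  have hD2 : (D ^ 2) (A.T i m) = 0 := by
    rw [sq, Module.End.mul_apply, hD1, map_neg, map_smul, hDm]
    simp
  have h0 := sq_zero' hcal h1 (by omega) (t i) (A.T i m) hD2
  rw [hD1] at h0
  have : (q - q⁻¹) * t i = 0 := by
    by_contra hne
    exact hm0 (by simpa [smul_eq_zero, hne] using h0)
  rcases mul_eq_zero.mp this with h | h
  · apply hq2
    have hqq : q = q⁻¹ := sub_eq_zero.mp h
    field_simp at hqq
    rw [sq]
    linear_combination hqq
  · exact hti h

end AHMod

end Aux3
section Aux4

variable {n : ℕ} {q : ℂ} {M : Type} [AddCommGroup M] [Module ℂ M]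

namespace AHMod

variable {A : AHMod n q M}

theorem tau_main (hq0 : q ≠ 0) {t : ℕ → ℂ} {m : M} (hm0 : m ≠ 0) (hm : A.wtVec t m)
    {k : ℕ} (h1 : 1 ≤ k) (h2 : k + 1 ≤ n) (hne : t (k + 1) ≠ t k) :
    (∃ m' : M, m' ≠ 0 ∧ A.wtVec (swapW k t) m') ∨
    (A.T k m = q • m ∧ t (k + 1) = q ^ 2 * t k) ∨
    (A.T k m = -q⁻¹ • m ∧ t (k + 1) = (q ^ 2)⁻¹ * t k) := by
  obtain ⟨c, hcdef⟩ : ∃ c : ℂ, c * (t (k + 1) - t k) = (q - q⁻¹) * t (k + 1) :=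
    ⟨_, div_mul_cancel₀ _ (sub_ne_zero.mpr hne)⟩
  have hxk : A.x k m = t k • m := hm k h1 (by omega)
  have hxk1 : A.x (k+1) m = t (k+1) • m := hm (k+1) (by omega) h2
  have e1 : A.x k (A.T k m) = t (k+1) • A.T k m - ((q - q⁻¹) * t (k+1)) • m := by
    have hcr := congrArg (fun f => f m) (A.cross2 k h1 h2)
    simp only [Module.End.mul_apply, LinearMap.sub_apply, LinearMap.smul_apply] at hcr
    rw [hxk1, map_smul, smul_smul] at hcr
    exact hcr
  have e2 : A.x (k+1) (A.T k m) = t k • A.T k m + ((q - q⁻¹) * t (k+1)) • m := by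
    have hcr := congrArg (fun f => f m) (A.cross1 k h1 h2)
    simp only [Module.End.mul_apply, LinearMap.add_apply, LinearMap.smul_apply] at hcr
    rw [hxk, map_smul, hxk1, smul_smul] at hcr
    exact hcr
  by_cases hz : A.T k m - c • m = 0
  · -- blocked case : T k m = c • m, and c is q or -q⁻¹
    have hT : A.T k m = c • m := sub_eq_zero.mp hz
    have hcr := congrArg (fun f => f m) (A.quad k h1 (by omega))
    simp only [Module.End.mul_apply, LinearMap.add_apply, LinearMap.smul_apply,
      Module.End.one_apply] at hcr
    rw [hT, map_smul, hT, smul_smul] at hcr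
    -- hcr : (c * c) • m = (q - q⁻¹) • c • m + m
    have hcc : c * c - (q - q⁻¹) * c - 1 = 0 := by
      have h0 : (c * c - ((q - q⁻¹) * c + 1)) • m = 0 := by
        rw [sub_smul, hcr]
        simp [add_smul, smul_smul]
      have := (smul_eq_zero.mp h0).resolve_right hm0
      linear_combination this
    have hqi : q * q⁻¹ = 1 := mul_inv_cancel₀ hq0
    have hfact : (c - q) * (c + q⁻¹) = 0 := by linear_combination hcc - hqi
    rcases mul_eq_zero.mp hfact with h | h
    · right; left
      refine ⟨?_, ?_⟩
      · rw [hT, sub_eq_zero.mp h]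
      linear_combination q * hcdef - (q * t (k+1) - q * t k) * h - t (k+1) * hqi
    · right; right
      refine ⟨?_, ?_⟩
      · rw [hT]
        have hcq : c = -q⁻¹ := by linear_combination h
        rw [hcq]
      have hqi2 : q ^ 2 * (q ^ 2)⁻¹ = 1 := mul_inv_cancel₀ (pow_ne_zero 2 hq0)
      have h2' : q⁻¹ * t k = q * t (k+1) := by
        linear_combination hcdef - (t (k+1) - t k) * h
      have hY : t k = q ^ 2 * t (k+1) := by
        linear_combination q * h2' - t k * hqi
      linear_combination -((q ^ 2)⁻¹ * hY) - t (k+1) * hqi2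
  · left
    refine ⟨A.T k m - c • m, hz, ?_⟩
    intro r hr1 hr2
    by_cases hrk : r = k
    · subst hrk
      have hsw : swapW r t r = t (r + 1) := by simp [swapW]
      rw [hsw, map_sub, map_smul, e1, hxk]
      match_scalars <;>
        first
          | ring1
          | linear_combination hcdef
          | linear_combination -hcdef
          | linear_combination 2 * hcdef
          | linear_combination -2 * hcdef
    · by_cases hrk1 : r = k + 1
      · subst hrk1
        have hsw : swapW k t (k + 1) = t k := by simp [swapW]
        rw [hsw, map_sub, map_smul, e2, hxk1]
        match_scalars <;>
          first
            | ring1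
            | linear_combination hcdef
            | linear_combination -hcdef
            | linear_combination 2 * hcdef
            | linear_combination -2 * hcdef
      · have hsw : swapW k t r = t r := by simp [swapW, hrk, hrk1]
        have hcomm := congrArg (fun f => f m) (A.comm_xT r k hr1 hr2 h1 (by omega)
          (fun hh => hrk1 hh.symm) (fun hh => hrk hh.symm))
        simp only [Module.End.mul_apply] at hcomm
        have hxr : A.x r m = t r • m := hm r hr1 hr2
        rw [hsw, map_sub, map_smul, hxr, hcomm, hxr, map_smul]
        match_scalars <;> ring

end AHMod

end Aux4
section Aux5

variable {n : ℕ} {q : ℂ} {M : Type} [AddCommGroup M] [Module ℂ M]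

theorem swapW_left (k : ℕ) (t : ℕ → ℂ) : swapW k t k = t (k + 1) := by simp [swapW]

theorem swapW_right (k : ℕ) (t : ℕ → ℂ) : swapW k t (k + 1) = t k := by simp [swapW]

theorem swapW_other (k r : ℕ) (t : ℕ → ℂ) (h1 : r ≠ k) (h2 : r ≠ k + 1) :
    swapW k t r = t r := by simp [swapW, h1, h2]

theorem swapW_ne0 {t : ℕ → ℂ} (ht0 : ∀ r, 1 ≤ r → r ≤ n → t r ≠ 0) {k : ℕ}
    (hk1 : 1 ≤ k) (hk2 : k + 1 ≤ n) : ∀ r, 1 ≤ r → r ≤ n → swapW k t r ≠ 0 := by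
  intro r hr1 hr2
  by_cases h1 : r = k
  · subst h1; rw [swapW_left]; exact ht0 _ (by omega) (by omega)
  · by_cases h2 : r = k + 1
    · subst h2; rw [swapW_right]; exact ht0 _ (by omega) (by omega)
    · rw [swapW_other _ _ _ h1 h2]; exact ht0 _ hr1 hr2

theorem q2a {q a : ℂ} (hq2 : q ^ 2 ≠ 1) (ha : a ≠ 0) (h : a = q ^ 2 * a) : False := by
  have h'' : (q ^ 2 - 1) * a = 0 := by linear_combination -h
  rcases mul_eq_zero.mp h'' with h3 | h3
  · exact hq2 (by linear_combination h3)
  · exact ha h3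

theorem q2b {q a : ℂ} (hq0 : q ≠ 0) (hq2 : q ^ 2 ≠ 1) (ha : a ≠ 0)
    (h : a = (q ^ 2)⁻¹ * a) : False := by
  have hqi2 : q ^ 2 * (q ^ 2)⁻¹ = 1 := mul_inv_cancel₀ (pow_ne_zero 2 hq0)
  have h' : q ^ 2 * a = a := by linear_combination q ^ 2 * h + a * hqi2
  have h'' : (q ^ 2 - 1) * a = 0 := by linear_combination h'
  rcases mul_eq_zero.mp h'' with h3 | h3
  · exact hq2 (by linear_combination h3)
  · exact ha h3

theorem q4a {q a : ℂ} (hq4 : q ^ 4 ≠ 1) (ha : a ≠ 0) (h : a = q ^ 2 * (q ^ 2 * a)) :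
    False := by
  have h'' : (q ^ 4 - 1) * a = 0 := by linear_combination -h
  rcases mul_eq_zero.mp h'' with h3 | h3
  · exact hq4 (by linear_combination h3)
  · exact ha h3

theorem q4b {q a : ℂ} (hq0 : q ≠ 0) (hq4 : q ^ 4 ≠ 1) (ha : a ≠ 0)
    (h : a = (q ^ 2)⁻¹ * ((q ^ 2)⁻¹ * a)) : False := by
  have hqi2 : q ^ 2 * (q ^ 2)⁻¹ = 1 := mul_inv_cancel₀ (pow_ne_zero 2 hq0)
  have h2 : q ^ 2 * a = (q ^ 2)⁻¹ * a := by
    linear_combination q ^ 2 * h + ((q ^ 2)⁻¹ * a) * hqi2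
  have h3 : q ^ 2 * (q ^ 2 * a) = a := by
    linear_combination q ^ 2 * h2 + a * hqi2
  exact q4a hq4 ha h3.symm

namespace AHMod

variable {A : AHMod n q M}

theorem braid_contr (hq0 : q ≠ 0) (hq : ∀ k : ℕ, 0 < k → q ^ k ≠ 1)
    {m : M} (hm0 : m ≠ 0) {i : ℕ} (h1 : 1 ≤ i) (h2 : i + 2 ≤ n) {α β : ℂ}
    (hT1 : A.T i m = α • m) (hT2 : A.T (i + 1) m = β • m)
    (hab : (α = q ∧ β = -q⁻¹) ∨ (α = -q⁻¹ ∧ β = q)) : False := by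
  have hbr := congrArg (fun f => f m) (A.braid i h1 (by omega))
  simp only [Module.End.mul_apply, hT1, hT2, map_smul, smul_smul] at hbr
  have hz : (α * (β * α) - β * (α * β)) • m = 0 := by
    rw [sub_smul, hbr, sub_self]
  have hs : α * (β * α) - β * (α * β) = 0 := by
    rcases smul_eq_zero.mp hz with h | h
    · exact h
    · exact absurd h hm0
  have hqi : q * q⁻¹ = 1 := mul_inv_cancel₀ hq0
  apply hq 4 (by norm_num)
  have hq2 : q ^ 2 = -1 := by
    rcases hab with ⟨ha', hb'⟩ | ⟨ha', hb'⟩ <;> rw [ha', hb'] at hs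
    · linear_combination -q * hs - (q ^ 2 + q * q⁻¹ + 1) * hqi
    · linear_combination q * hs - (q ^ 2 + q * q⁻¹ + 1) * hqi
  calc q ^ 4 = (q ^ 2) ^ 2 := by ring
    _ = 1 := by rw [hq2]; norm_num

theorem no_d2 (hcal : A.Calibrated) (hq0 : q ≠ 0) (hq : ∀ k : ℕ, 0 < k → q ^ k ≠ 1)
    {t : ℕ → ℂ} (ht : ∃ m : M, m ≠ 0 ∧ A.wtVec t m)
    (ht0 : ∀ r, 1 ≤ r → r ≤ n → t r ≠ 0) {i : ℕ} (h1 : 1 ≤ i) (h2 : i + 2 ≤ n) :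
    t (i + 2) ≠ t i := by
  intro heq
  obtain ⟨m, hm0, hm⟩ := ht
  have hq2 : q ^ 2 ≠ 1 := hq 2 (by norm_num)
  have hq4 : q ^ 4 ≠ 1 := hq 4 (by norm_num)
  have ha : t i ≠ 0 := ht0 i h1 (by omega)
  have hne1 : t (i + 1) ≠ t i := A.part1 hcal hq0 hq2 ⟨m, hm0, hm⟩ ha h1 (by omega)
  have hi2 : i + 1 + 1 = i + 2 := by omega
  rcases A.tau_main hq0 hm0 hm h1 (by omega : i + 1 ≤ n) hne1 with
    ⟨m', hm'0, hm'⟩ | ⟨hT1, hc1⟩ | ⟨hT1, hc1⟩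
  · -- generic swap at i : new weight has equal adjacent entries at i+1, i+2
    have hne := A.part1 hcal hq0 hq2 ⟨m', hm'0, hm'⟩
      (show swapW i t (i + 1) ≠ 0 by rw [swapW_right]; exact ha) (by omega : 1 ≤ i + 1)
      (by omega : i + 1 + 1 ≤ n)
    apply hne
    rw [swapW_right, hi2, swapW_other _ _ _ (by omega) (by omega), heq]
  · -- hT1 : T i m = q • m, hc1 : t (i+1) = q² t i
    have hne2 : t (i + 1 + 1) ≠ t (i + 1) := by
      rw [hi2, heq, hc1]
      exact fun hcon => q2a hq2 ha hcon
    rcases A.tau_main hq0 hm0 hm (by omega : 1 ≤ i + 1) (by omega : i + 1 + 1 ≤ n) hne2 with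
      ⟨m', hm'0, hm'⟩ | ⟨hT2, hc2⟩ | ⟨hT2, hc2⟩
    · have hne := A.part1 hcal hq0 hq2 ⟨m', hm'0, hm'⟩
        (show swapW (i+1) t i ≠ 0 by
          rw [swapW_other _ _ _ (by omega) (by omega)]; exact ha)
        h1 (by omega : i + 1 ≤ n)
      apply hne
      rw [swapW_left, hi2, heq, swapW_other _ _ _ (by omega) (by omega)]
    · rw [hi2, heq, hc1] at hc2
      exact q4a hq4 ha hc2
    · -- t i = (q²)⁻¹ (q² t i) : no scalar contradiction ; use braid
      exact A.braid_contr hq0 hq hm0 h1 h2 hT1 hT2 (Or.inl ⟨rfl, rfl⟩)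
  · -- hT1 : T i m = -(q⁻¹ • m), hc1 : t (i+1) = (q²)⁻¹ t i
    have hne2 : t (i + 1 + 1) ≠ t (i + 1) := by
      rw [hi2, heq, hc1]
      exact fun hcon => q2b hq0 hq2 ha hcon
    rcases A.tau_main hq0 hm0 hm (by omega : 1 ≤ i + 1) (by omega : i + 1 + 1 ≤ n) hne2 with
      ⟨m', hm'0, hm'⟩ | ⟨hT2, hc2⟩ | ⟨hT2, hc2⟩
    · have hne := A.part1 hcal hq0 hq2 ⟨m', hm'0, hm'⟩
        (show swapW (i+1) t i ≠ 0 by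
          rw [swapW_other _ _ _ (by omega) (by omega)]; exact ha)
        h1 (by omega : i + 1 ≤ n)
      apply hne
      rw [swapW_left, hi2, heq, swapW_other _ _ _ (by omega) (by omega)]
    · exact A.braid_contr hq0 hq hm0 h1 h2 hT1 hT2 (Or.inr ⟨rfl, rfl⟩)
    · rw [hi2, heq, hc1] at hc2
      exact q4b hq0 hq4 ha hc2


end AHMod

end Aux5
section Aux6

variable {n : ℕ} {q : ℂ} {M : Type} [AddCommGroup M] [Module ℂ M]

namespace AHMod

variable {A : AHMod n q M}

theorem part2core (hcal : A.Calibrated) (hq0 : q ≠ 0) (hq : ∀ k : ℕ, 0 < k → q ^ k ≠ 1) :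
    ∀ d : ℕ, ∀ t : ℕ → ℂ, ∀ i j : ℕ,
      (∃ m : M, m ≠ 0 ∧ A.wtVec t m) → (∀ r, 1 ≤ r → r ≤ n → t r ≠ 0) →
      1 ≤ i → i < j → j ≤ n → j = i + d → t i = t j →
      ∃ k l, i < k ∧ k < j ∧ i < l ∧ l < j ∧
        ((t k = q ^ 2 * t i ∧ t l = (q ^ 2)⁻¹ * t i) ∨
         (t k = (q ^ 2)⁻¹ * t i ∧ t l = q ^ 2 * t i)) := by
  intro d
  induction d using Nat.strong_induction_on with
  | _ d ih =>
  intro t i j ht ht0 hi hij hjn hjd heq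
  subst hjd
  have hq2 : q ^ 2 ≠ 1 := hq 2 (by norm_num)
  have hq20 : (q : ℂ) ^ 2 ≠ 0 := pow_ne_zero 2 hq0
  rcases d with _ | _ | _ | d
  · exact absurd hij (by omega)
  · -- d = 1 : adjacent equal, impossible
    exact absurd heq.symm (A.part1 hcal hq0 hq2 ht (ht0 i hi (by omega)) hi (by omega))
  · -- d = 2 : impossible
    exact absurd heq.symm (A.no_d2 hcal hq0 hq ht ht0 hi (by omega))
  · -- d + 3 ≥ 3
    obtain ⟨e, he⟩ : ∃ e, i + (d + 3) = e + 1 := ⟨i + d + 2, by omega⟩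
    have hadj_i : t (i + 1) ≠ t i :=
      A.part1 hcal hq0 hq2 ht (ht0 i hi (by omega)) hi (by omega)
    have hadj_e : t (e + 1) ≠ t e :=
      A.part1 hcal hq0 hq2 ht (ht0 e (by omega) (by omega)) (by omega) (by omega)
    have hte1 : t (e + 1) = t i := by rw [← he, ← heq]
    obtain ⟨m, hm0, hm⟩ := ht
    by_cases hc1 : t (i + 1) = q ^ 2 * t i
    · by_cases hc2 : t e = (q ^ 2)⁻¹ * t i
      · exact ⟨i + 1, e, by omega, by omega, by omega, by omega, Or.inl ⟨hc1, hc2⟩⟩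
      · by_cases hc3 : t e = q ^ 2 * t i
        · rcases Nat.eq_or_lt_of_le (show i + 2 ≤ e by omega) with he2 | he2
          · exfalso
            apply A.part1 hcal hq0 hq2 ⟨m, hm0, hm⟩ (ht0 (i + 1) (by omega) (by omega))
              (by omega : 1 ≤ i + 1) (by omega : i + 1 + 1 ≤ n)
            rw [show i + 1 + 1 = i + 2 by omega, he2, hc3, hc1]
          · obtain ⟨k0, l0, hk1, hk2, hl1, hl2, hpat⟩ :=
              ih (e - (i + 1)) (by omega) t (i + 1) e ⟨m, hm0, hm⟩ ht0 (by omega) (by omega)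
                (by omega) (by omega) (by rw [hc1, hc3])
            have hq2i : (q ^ 2)⁻¹ * (q ^ 2 * t i) = t i := by
              rw [← mul_assoc, inv_mul_cancel₀ hq20, one_mul]
            have hex : ∃ l', i < l' ∧ l' < e ∧ t l' = t i := by
              rcases hpat with ⟨hk, hl⟩ | ⟨hk, hl⟩
              · exact ⟨l0, by omega, by omega, by rw [hl, hc1, hq2i]⟩
              · exact ⟨k0, by omega, by omega, by rw [hk, hc1, hq2i]⟩
            obtain ⟨l', hl'1, hl'2, hl'3⟩ := hex
            obtain ⟨k', l'', h1', h2', h3', h4', hpat'⟩ :=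
              ih (l' - i) (by omega) t i l' ⟨m, hm0, hm⟩ ht0 hi (by omega) (by omega)
                (by omega) hl'3.symm
            exact ⟨k', l'', by omega, by omega, by omega, by omega, hpat'⟩
        · -- generic at e : swap there
          rcases A.tau_main hq0 hm0 hm (show 1 ≤ e by omega) (show e + 1 ≤ n by omega)
              hadj_e with ⟨m', hm'0, hm'⟩ | ⟨_, hb⟩ | ⟨_, hb⟩
          · have hswne0 := swapW_ne0 ht0 (show 1 ≤ e by omega) (show e + 1 ≤ n by omega)
            have hti' : swapW e t i = t i := swapW_other _ _ _ (by omega) (by omega)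
            have hte' : swapW e t e = t i := by rw [swapW_left, hte1]
            obtain ⟨k0, l0, hk1, hk2, hl1, hl2, hpat⟩ :=
              ih (e - i) (by omega) (swapW e t) i e ⟨m', hm'0, hm'⟩ hswne0 hi (by omega)
                (by omega) (by omega) (by rw [hti', hte'])
            refine ⟨k0, l0, by omega, by omega, by omega, by omega, ?_⟩
            have hk0 : swapW e t k0 = t k0 := swapW_other _ _ _ (by omega) (by omega)
            have hl0 : swapW e t l0 = t l0 := swapW_other _ _ _ (by omega) (by omega)
            rwa [hk0, hl0, hti'] at hpat
          · exfalso; apply hc2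
            rw [hte1] at hb
            rw [hb, ← mul_assoc, inv_mul_cancel₀ hq20, one_mul]
          · exfalso; apply hc3
            rw [hte1] at hb
            rw [hb, ← mul_assoc, mul_inv_cancel₀ hq20, one_mul]
    · by_cases hc1' : t (i + 1) = (q ^ 2)⁻¹ * t i
      · by_cases hc2 : t e = q ^ 2 * t i
        · exact ⟨i + 1, e, by omega, by omega, by omega, by omega, Or.inr ⟨hc1', hc2⟩⟩
        · by_cases hc3 : t e = (q ^ 2)⁻¹ * t i
          · rcases Nat.eq_or_lt_of_le (show i + 2 ≤ e by omega) with he2 | he2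
            · exfalso
              apply A.part1 hcal hq0 hq2 ⟨m, hm0, hm⟩ (ht0 (i + 1) (by omega) (by omega))
                (by omega : 1 ≤ i + 1) (by omega : i + 1 + 1 ≤ n)
              rw [show i + 1 + 1 = i + 2 by omega, he2, hc3, hc1']
            · obtain ⟨k0, l0, hk1, hk2, hl1, hl2, hpat⟩ :=
                ih (e - (i + 1)) (by omega) t (i + 1) e ⟨m, hm0, hm⟩ ht0 (by omega) (by omega)
                  (by omega) (by omega) (by rw [hc1', hc3])
              have hq2i : q ^ 2 * ((q ^ 2)⁻¹ * t i) = t i := by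
                rw [← mul_assoc, mul_inv_cancel₀ hq20, one_mul]
              have hex : ∃ l', i < l' ∧ l' < e ∧ t l' = t i := by
                rcases hpat with ⟨hk, hl⟩ | ⟨hk, hl⟩
                · exact ⟨k0, by omega, by omega, by rw [hk, hc1', hq2i]⟩
                · exact ⟨l0, by omega, by omega, by rw [hl, hc1', hq2i]⟩
              obtain ⟨l', hl'1, hl'2, hl'3⟩ := hex
              obtain ⟨k', l'', h1', h2', h3', h4', hpat'⟩ :=
                ih (l' - i) (by omega) t i l' ⟨m, hm0, hm⟩ ht0 hi (by omega) (by omega)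
                  (by omega) hl'3.symm
              exact ⟨k', l'', by omega, by omega, by omega, by omega, hpat'⟩
          · rcases A.tau_main hq0 hm0 hm (show 1 ≤ e by omega) (show e + 1 ≤ n by omega)
                hadj_e with ⟨m', hm'0, hm'⟩ | ⟨_, hb⟩ | ⟨_, hb⟩
            · have hswne0 := swapW_ne0 ht0 (show 1 ≤ e by omega) (show e + 1 ≤ n by omega)
              have hti' : swapW e t i = t i := swapW_other _ _ _ (by omega) (by omega)
              have hte' : swapW e t e = t i := by rw [swapW_left, hte1]
              obtain ⟨k0, l0, hk1, hk2, hl1, hl2, hpat⟩ :=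
                ih (e - i) (by omega) (swapW e t) i e ⟨m', hm'0, hm'⟩ hswne0 hi (by omega)
                  (by omega) (by omega) (by rw [hti', hte'])
              refine ⟨k0, l0, by omega, by omega, by omega, by omega, ?_⟩
              have hk0 : swapW e t k0 = t k0 := swapW_other _ _ _ (by omega) (by omega)
              have hl0 : swapW e t l0 = t l0 := swapW_other _ _ _ (by omega) (by omega)
              rwa [hk0, hl0, hti'] at hpat
            · exfalso; apply hc3
              rw [hte1] at hb
              rw [hb, ← mul_assoc, inv_mul_cancel₀ hq20, one_mul]
            · exfalso; apply hc2
              rw [hte1] at hb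
              rw [hb, ← mul_assoc, mul_inv_cancel₀ hq20, one_mul]
      · -- generic at i : swap there
        rcases A.tau_main hq0 hm0 hm hi (show i + 1 ≤ n by omega) hadj_i with
          ⟨m', hm'0, hm'⟩ | ⟨_, hb⟩ | ⟨_, hb⟩
        · have hswne0 := swapW_ne0 ht0 hi (show i + 1 ≤ n by omega)
          have h1' : swapW i t (i + 1) = t i := swapW_right i t
          have hj' : swapW i t (i + (d + 3)) = t i := by
            rw [swapW_other _ _ _ (by omega) (by omega), ← heq]
          obtain ⟨k0, l0, hk1, hk2, hl1, hl2, hpat⟩ :=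
            ih (i + (d + 3) - (i + 1)) (by omega) (swapW i t) (i + 1) (i + (d + 3))
              ⟨m', hm'0, hm'⟩ hswne0 (by omega) (by omega) (by omega) (by omega)
              (by rw [h1', hj'])
          refine ⟨k0, l0, by omega, by omega, by omega, by omega, ?_⟩
          have hk0 : swapW i t k0 = t k0 := swapW_other _ _ _ (by omega) (by omega)
          have hl0 : swapW i t l0 = t l0 := swapW_other _ _ _ (by omega) (by omega)
          rwa [hk0, hl0, h1'] at hpat
        · exact absurd hb hc1
        · exact absurd hb hc1'

end AHMod

end Aux6

/-- For a weight `t` of a calibrated `H̃_n`-module: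
(1) `t_{i+1} ≠ t_i` for all `i`; (2) if `t_i = t_j` for `i < j` then there are
`k, ℓ` strictly between `i` and `j` with `{t_k, t_ℓ} = {q² t_i, q⁻² t_i}`. -/
theorem weight_pattern_of_calibrated
    (n : ℕ) (q : ℂ) (hq0 : q ≠ 0) (hq : ∀ k : ℕ, 0 < k → q ^ k ≠ 1)
    (M : Type) [AddCommGroup M] [Module ℂ M] [FiniteDimensional ℂ M]
    (A : AHMod n q M) (hcal : A.Calibrated)
    (t : ℕ → ℂ) (ht0 : ∀ j, 1 ≤ j → j ≤ n → t j ≠ 0) (hwt : A.IsWeight t) :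
    (∀ i, 1 ≤ i → i + 1 ≤ n → t (i + 1) ≠ t i) ∧
    (∀ i j, 1 ≤ i → i < j → j ≤ n → t i = t j →
      ∃ k l, i < k ∧ k < j ∧ i < l ∧ l < j ∧
        ((t k = q ^ 2 * t i ∧ t l = (q ^ 2)⁻¹ * t i) ∨
         (t k = (q ^ 2)⁻¹ * t i ∧ t l = q ^ 2 * t i))) := by
  obtain ⟨m, hm0, hm⟩ := AHMod.wtvec_of_weight hcal t hwt
  constructor
  · intro i h1 h2
    exact A.part1 hcal hq0 (hq 2 (by norm_num)) ⟨m, hm0, hm⟩ (ht0 i h1 (by omega)) h1 h2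
  · intro i j h1 h2 h3 heq
    exact A.part2core hcal hq0 hq (j - i) t i j ⟨m, hm0, hm⟩ ht0 h1 h2 h3 (by omega) heq
end
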